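/- arXiv:1304.5248 — 9 statements merged into one kernel-verified Lean document; each statement's English description precedes it below -/
import Mathlib

section
/- Let K be a field of characteristic ≠ 2 and k ≥ 1. Let M₀ be the (k+1)×2k block matrix [[I_k, 0],[0, 0]] and J the 2k×2k block matrix [[0, I_k],[I_k, 0]]. The set T = {N ∈ Mat_{(k+1)×2k}(K) : M₀ · J · Nᵀ + N · J · M₀ᵀ = 0} is a K-linear subspace of the 2k(k+1)-dimensional space of (k+1)×2k matrices, of dimension (3k² + k)/2; equivalently, T has codimension k(k+1)/2 + k in Mat_{(k+1)×2k}(K). -/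
/-!
Write a matrix `N` in blocks `[[A, B], [C, D]]`. Then
`M₀ J Nᵀ + N J M₀ᵀ = [[Bᵀ + B, Dᵀ], [D, 0]]`, so `N` is tangent exactly when `B` is
skew-symmetric and `D = 0`, with `A` and `C` free. As `2 ≠ 0`, a skew-symmetric `k × k` matrix
vanishes on the diagonal and is determined by its `k.choose 2` entries above it, so
`dim T = k² + k.choose 2 + k = (3k² + k)/2`.
-/

open Matrix LieAlgebra.Orthogonal

section SkewSymmetric

variable {R : Type*} [CommRing R] {n : Type*} [Fintype n] [DecidableEq n]

lemma so_apply_swap {A : Matrix n n R} (hA : A ∈ so n R) (i j : n) : A j i = -A i j :=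
  congrFun (congrFun ((mem_so n R A).1 hA) i) j

lemma so_apply_self [NoZeroDivisors R] (h2 : (2 : R) ≠ 0) {A : Matrix n n R} (hA : A ∈ so n R)
    (i : n) : A i i = 0 := by
  have h := so_apply_swap hA i i
  exact (mul_eq_zero.1 (show (2 : R) * A i i = 0 by linear_combination h)).resolve_left h2

variable [LinearOrder n]

def skewOfUpper (b : {p : n × n // p.1 < p.2} → R) : Matrix n n R :=
  of fun i j => if h : i < j then b ⟨(i, j), h⟩ else if h' : j < i then -b ⟨(j, i), h'⟩ else 0

lemma skewOfUpper_mem_so (b : {p : n × n // p.1 < p.2} → R) : skewOfUpper b ∈ so n R := by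
  rw [mem_so]
  ext i j
  rcases lt_trichotomy i j with h | rfl | h
  · simp [skewOfUpper, h, h.not_gt]
  · simp [skewOfUpper]
  · simp [skewOfUpper, h, h.not_gt]

def soUpperEntries : so n R →ₗ[R] ({p : n × n // p.1 < p.2} → R) where
  toFun A p := (A : Matrix n n R) p.1.1 p.1.2
  map_add' _ _ := rfl
  map_smul' _ _ := rfl

lemma soUpperEntries_bijective [NoZeroDivisors R] (h2 : (2 : R) ≠ 0) :
    Function.Bijective (soUpperEntries : so n R →ₗ[R] _) := by
  refine ⟨fun A B hAB => ?_, fun b => ⟨⟨skewOfUpper b, skewOfUpper_mem_so b⟩, ?_⟩⟩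
  · have hupper (i j : n) (h : i < j) : (A : Matrix n n R) i j = (B : Matrix n n R) i j :=
      congrFun hAB ⟨(i, j), h⟩
    ext i j
    rcases lt_trichotomy i j with h | rfl | h
    · exact hupper i j h
    · rw [so_apply_self h2 A.2, so_apply_self h2 B.2]
    · rw [so_apply_swap A.2, so_apply_swap B.2, hupper j i h]
  · funext p
    change skewOfUpper b p.1.1 p.1.2 = b p
    simp [skewOfUpper, p.2]

lemma finrank_so {K : Type*} [Field K] (h2 : (2 : K) ≠ 0) :
    Module.finrank K (so n K) = (Fintype.card n).choose 2 := by
  rw [(LinearEquiv.ofBijective _ (soUpperEntries_bijective h2)).finrank_eq,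
    Module.finrank_fintype_fun_eq_card, Fintype.card_subtype, ← Finset.univ_product_univ,
    Finset.card_product_filter_lt, Finset.card_univ]

end SkewSymmetric

lemma two_mul_choose_two_add_self (n : ℕ) : 2 * n.choose 2 + n = n * n := by
  induction n with
  | zero => rfl
  | succ n ih =>
    rw [Nat.choose_succ_succ', Nat.choose_one_right]
    linarith

namespace VarietyOfComplexes

variable (R : Type*) [CommRing R] (m p : Type*) [Fintype m] [DecidableEq m]

def typicalPoint : Matrix (m ⊕ p) (m ⊕ m) R := fromBlocks 1 0 0 0

def splitForm : Matrix (m ⊕ m) (m ⊕ m) R := fromBlocks 0 1 1 0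

/-- The differential at `typicalPoint` of `M ↦ M * splitForm * Mᵀ`. -/
def differential : Matrix (m ⊕ p) (m ⊕ m) R →ₗ[R] Matrix (m ⊕ p) (m ⊕ p) R where
  toFun N := typicalPoint R m p * splitForm R m * Nᵀ + N * splitForm R m * (typicalPoint R m p)ᵀ
  map_add' N N' := by
    simp only [transpose_add, Matrix.mul_add, Matrix.add_mul]
    abel
  map_smul' c N := by
    simp only [transpose_smul, Matrix.mul_smul, Matrix.smul_mul, smul_add, RingHom.id_apply]

def tangentSpace : Submodule R (Matrix (m ⊕ p) (m ⊕ m) R) := LinearMap.ker (differential R m p)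

variable {R m p}

lemma differential_apply (N : Matrix (m ⊕ p) (m ⊕ m) R) :
    differential R m p N =
      fromBlocks (N.toBlocks₁₂ᵀ + N.toBlocks₁₂) N.toBlocks₂₂ᵀ N.toBlocks₂₂ 0 := by
  conv_lhs => rw [← fromBlocks_toBlocks N]
  simp only [differential, typicalPoint, splitForm, LinearMap.coe_mk, AddHom.coe_mk,
    fromBlocks_transpose, fromBlocks_multiply, fromBlocks_add, Matrix.mul_zero, Matrix.zero_mul,
    Matrix.mul_one, Matrix.one_mul, add_zero, zero_add, transpose_zero, transpose_one]

lemma mem_tangentSpace_iff {N : Matrix (m ⊕ p) (m ⊕ m) R} :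
    N ∈ tangentSpace R m p ↔ N.toBlocks₁₂ ∈ so m R ∧ N.toBlocks₂₂ = 0 := by
  rw [tangentSpace, LinearMap.mem_ker, differential_apply, ← fromBlocks_zero, fromBlocks_inj,
    mem_so, eq_neg_iff_add_eq_zero, transpose_eq_zero, and_self_left]
  simp only [and_true]

def tangentSpaceEquiv : tangentSpace R m p ≃ₗ[R] Matrix m m R × so m R × Matrix p m R where
  toFun N := (N.1.toBlocks₁₁, ⟨N.1.toBlocks₁₂, (mem_tangentSpace_iff.1 N.2).1⟩, N.1.toBlocks₂₁)
  invFun X := ⟨fromBlocks X.1 X.2.1 X.2.2 0, mem_tangentSpace_iff.2 ⟨X.2.1.2, rfl⟩⟩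
  map_add' _ _ := rfl
  map_smul' _ _ := rfl
  left_inv N := by
    ext1
    conv_rhs => rw [← fromBlocks_toBlocks N.1, (mem_tangentSpace_iff.1 N.2).2]
  right_inv _ := rfl

lemma finrank_tangentSpace {K : Type*} [Field K] [LinearOrder m] [Fintype p]
    (h2 : (2 : K) ≠ 0) :
    Module.finrank K (tangentSpace K m p) =
      Fintype.card m * Fintype.card m + (Fintype.card m).choose 2 +
        Fintype.card p * Fintype.card m := by
  rw [tangentSpaceEquiv.finrank_eq, Module.finrank_prod, Module.finrank_prod, finrank_so h2,
    Module.finrank_matrix, Module.finrank_matrix, Module.finrank_self, mul_one, mul_one, add_assoc]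

end VarietyOfComplexes

theorem tangent_space_dimension_general (K : Type*) [Field K] (hchar : (2 : K) ≠ 0)
    (k : ℕ) :
    ∃ T : Submodule K (Matrix (Fin k ⊕ Fin 1) (Fin k ⊕ Fin k) K),
      (∀ N : Matrix (Fin k ⊕ Fin 1) (Fin k ⊕ Fin k) K,
        N ∈ T ↔
          fromBlocks (1 : Matrix (Fin k) (Fin k) K) 0 0 (0 : Matrix (Fin 1) (Fin k) K) *
              (fromBlocks 0 1 1 0 : Matrix (Fin k ⊕ Fin k) (Fin k ⊕ Fin k) K) * Nᵀ +
            N * (fromBlocks 0 1 1 0 : Matrix (Fin k ⊕ Fin k) (Fin k ⊕ Fin k) K) *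
              (fromBlocks (1 : Matrix (Fin k) (Fin k) K) 0 0
                (0 : Matrix (Fin 1) (Fin k) K))ᵀ = 0) ∧
      Module.finrank K (Matrix (Fin k ⊕ Fin 1) (Fin k ⊕ Fin k) K) = 2 * k * (k + 1) ∧
      Module.finrank K T = (3 * k ^ 2 + k) / 2 ∧
      Module.finrank K (Matrix (Fin k ⊕ Fin 1) (Fin k ⊕ Fin k) K) - Module.finrank K T =
        k * (k + 1) / 2 + k := by
  have hmat : Module.finrank K (Matrix (Fin k ⊕ Fin 1) (Fin k ⊕ Fin k) K) = 2 * k * (k + 1) := by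
    simp only [Module.finrank_matrix, Fintype.card_sum, Fintype.card_fin, Module.finrank_self]
    ring
  have hT := VarietyOfComplexes.finrank_tangentSpace (m := Fin k) (p := Fin 1) hchar
  simp only [Fintype.card_fin, one_mul] at hT
  have hchoose := two_mul_choose_two_add_self k
  refine ⟨VarietyOfComplexes.tangentSpace K (Fin k) (Fin 1), fun N => Iff.rfl, hmat, ?_, ?_⟩
  · rw [hT, sq]
    omega
  · rw [hmat, hT]
    ring_nf at hchoose ⊢
    omega

/-- Over a field `K` of characteristic `≠ 2`, the tangent space
`T = {N : M₀ · J · Nᵀ + N · J · M₀ᵀ = 0}` at the typical matrix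
`M₀ = [[Iₖ,0],[0,0]]` to the variety of complexes is a linear subspace of the
`2k(k+1)`-dimensional space of `(k+1) × 2k` matrices, of dimension
`(3k² + k)/2`, i.e. of codimension `k(k+1)/2 + k`. -/
theorem tangent_space_dimension (K : Type*) [Field K] (hchar : (2 : K) ≠ 0)
    (k : ℕ) (hk : 1 ≤ k) :
    ∃ T : Submodule K (Matrix (Fin k ⊕ Fin 1) (Fin k ⊕ Fin k) K),
      (∀ N : Matrix (Fin k ⊕ Fin 1) (Fin k ⊕ Fin k) K,
        N ∈ T ↔
          fromBlocks (1 : Matrix (Fin k) (Fin k) K) 0 0 (0 : Matrix (Fin 1) (Fin k) K) *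
              (fromBlocks 0 1 1 0 : Matrix (Fin k ⊕ Fin k) (Fin k ⊕ Fin k) K) * Nᵀ +
            N * (fromBlocks 0 1 1 0 : Matrix (Fin k ⊕ Fin k) (Fin k ⊕ Fin k) K) *
              (fromBlocks (1 : Matrix (Fin k) (Fin k) K) 0 0
                (0 : Matrix (Fin 1) (Fin k) K))ᵀ = 0) ∧
      Module.finrank K (Matrix (Fin k ⊕ Fin 1) (Fin k ⊕ Fin k) K) = 2 * k * (k + 1) ∧
      Module.finrank K T = (3 * k ^ 2 + k) / 2 ∧
      Module.finrank K (Matrix (Fin k ⊕ Fin 1) (Fin k ⊕ Fin k) K) - Module.finrank K T =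
        k * (k + 1) / 2 + k :=
  tangent_space_dimension_general K hchar k
end

section
/- With the Tom unprojection data below, the row vector L annihilates the matrix M₁: L · M₁ = 0, i.e., for each r ∈ {1,…,16}, Σ_{j=1}^{9} L_j · (c_r)_j = 0. -/
open Matrix MvPolynomial

theorem tom_L_annihilates_M₁_general (R : Type*) [CommRing R]
    (a b c d e f g h i l : MvPolynomial (Fin 10) R)
    (L : Fin 9 → MvPolynomial (Fin 10) R)
    (hL : L = ![l*a*c + e*h - f*g, -(l*a*b) - d*h + e*f, l*a^2 + d*g - e^2,
      a*h - b*g + c*e, -(a*f) + b*e - c*d, l*b^2 + d*i - f^2,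
      l*b*c + e*i - f*h, l*c^2 + g*i - h^2, a*i - b*h + c*f])
    (M₁ : Matrix (Fin 9) (Fin 16) (MvPolynomial (Fin 10) R))
    (hM₁ : M₁ = (!![0, a, b, d, e, 0, 0, 0, 0;
      -a, 0, c, e, g, 0, 0, 0, 0;
      -b, -c, 0, f, h, 0, 0, 0, 0;
      -d, -e, -f, 0, -(l*a), 0, 0, 0, 0;
      -e, -g, -h, l*a, 0, 0, 0, 0, 0;
      -h, 0, 0, l*c, 0, 0, g, -e, 0;
      f, -h, 0, -(l*b), l*c, -g, 0, d, 0;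
      0, f, 0, 0, -(l*b), e, -d, 0, 0;
      i, 0, 0, 0, 0, 0, -h, f, -(l*c);
      0, i, 0, 0, 0, h, -f, 0, l*b;
      0, h, i, 0, -(l*c), 0, e, -d, -(l*a);
      0, 0, 0, i, 0, 0, -c, b, -h;
      0, 0, 0, 0, i, c, -b, 0, f;
      0, -b, 0, 0, f, -a, 0, 0, d;
      0, -c, 0, 0, h, 0, -a, 0, e;
      c, 0, 0, -h, 0, 0, 0, -a, g] :
        Matrix (Fin 16) (Fin 9) (MvPolynomial (Fin 10) R))ᵀ)
    : ∀ r : Fin 16, ∑ j : Fin 9, L j * M₁ j r = 0 := by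
  subst hL hM₁
  intro r
  fin_cases r <;>
    simp only [Fin.sum_univ_succ, transpose_apply, of_apply, cons_val, cons_val_succ,
      Fin.reduceFinMk] <;>
    ring

/-- For the Tom unprojection data (the `4×4` Pfaffians `L` of
the extrasymmetric `6×6` matrix and the `9×16` first syzygy matrix `M₁` with
columns `c₁,…,c₁₆`), the row vector `L` annihilates `M₁`: for each column `r`,
`Σ_j L_j · (c_r)_j = 0`. -/
theorem tom_L_annihilates_M₁ (R : Type*) [CommRing R]
    (a b c d e f g h i l : MvPolynomial (Fin 10) R)
    (hvars : (a, b, c, d, e, f, g, h, i, l) =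
      (X 0, X 1, X 2, X 3, X 4, X 5, X 6, X 7, X 8, X 9))
    (L : Fin 9 → MvPolynomial (Fin 10) R)
    (hL : L = ![l*a*c + e*h - f*g, -(l*a*b) - d*h + e*f, l*a^2 + d*g - e^2,
      a*h - b*g + c*e, -(a*f) + b*e - c*d, l*b^2 + d*i - f^2,
      l*b*c + e*i - f*h, l*c^2 + g*i - h^2, a*i - b*h + c*f])
    (M₁ : Matrix (Fin 9) (Fin 16) (MvPolynomial (Fin 10) R))
    (hM₁ : M₁ = (!![0, a, b, d, e, 0, 0, 0, 0;
      -a, 0, c, e, g, 0, 0, 0, 0;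
      -b, -c, 0, f, h, 0, 0, 0, 0;
      -d, -e, -f, 0, -(l*a), 0, 0, 0, 0;
      -e, -g, -h, l*a, 0, 0, 0, 0, 0;
      -h, 0, 0, l*c, 0, 0, g, -e, 0;
      f, -h, 0, -(l*b), l*c, -g, 0, d, 0;
      0, f, 0, 0, -(l*b), e, -d, 0, 0;
      i, 0, 0, 0, 0, 0, -h, f, -(l*c);
      0, i, 0, 0, 0, h, -f, 0, l*b;
      0, h, i, 0, -(l*c), 0, e, -d, -(l*a);
      0, 0, 0, i, 0, 0, -c, b, -h;
      0, 0, 0, 0, i, c, -b, 0, f;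
      0, -b, 0, 0, f, -a, 0, 0, d;
      0, -c, 0, 0, h, 0, -a, 0, e;
      c, 0, 0, -h, 0, 0, 0, -a, g] :
        Matrix (Fin 16) (Fin 9) (MvPolynomial (Fin 10) R))ᵀ)
    : ∀ r : Fin 16, ∑ j : Fin 9, L j * M₁ j r = 0 :=
  tom_L_annihilates_M₁_general R a b c d e f g h i l L hL M₁ hM₁
end

section
/- With the Tom unprojection data below, let v = (−λc, λb, 0, 0, 0, d, e, g, 0, 0, 0, 0, 0, 0, 0, 0) be a row 16-vector. Then Σ_{r=1}^{16} v_r · (c_r)_j equals −λab−dh+ef for j = 1, equals −λac−eh+fg for j = 2, and equals 0 for j = 3,…,9. That is, v expresses the Koszul syzygy between the generators L₁ = λac+eh−fg and L₂ = −λab−dh+ef as a combination of the 16 minimal first syzygies. -/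
open Matrix MvPolynomial

/-- The sixteen minimal first syzygies `c₁, …, c₁₆` of the Tom Pfaffians, as the rows of a
matrix over an arbitrary commutative ring (`l` stands for `λ`). -/
def tomSyzygyRows {S : Type*} [CommRing S] (a b c d e f g h i l : S) :
    Matrix (Fin 16) (Fin 9) S :=
  !![0, a, b, d, e, 0, 0, 0, 0;
    -a, 0, c, e, g, 0, 0, 0, 0;
    -b, -c, 0, f, h, 0, 0, 0, 0;
    -d, -e, -f, 0, -(l*a), 0, 0, 0, 0;
    -e, -g, -h, l*a, 0, 0, 0, 0, 0;
    -h, 0, 0, l*c, 0, 0, g, -e, 0;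
    f, -h, 0, -(l*b), l*c, -g, 0, d, 0;
    0, f, 0, 0, -(l*b), e, -d, 0, 0;
    i, 0, 0, 0, 0, 0, -h, f, -(l*c);
    0, i, 0, 0, 0, h, -f, 0, l*b;
    0, h, i, 0, -(l*c), 0, e, -d, -(l*a);
    0, 0, 0, i, 0, 0, -c, b, -h;
    0, 0, 0, 0, i, c, -b, 0, f;
    0, -b, 0, 0, f, -a, 0, 0, d;
    0, -c, 0, 0, h, 0, -a, 0, e;
    c, 0, 0, -h, 0, 0, 0, -a, g]

theorem vecMul_tomSyzygyRows {S : Type*} [CommRing S] (a b c d e f g h i l : S) :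
    ![-(l*c), l*b, 0, 0, 0, d, e, g, 0, 0, 0, 0, 0, 0, 0, 0] ᵥ*
        tomSyzygyRows a b c d e f g h i l =
      ![-(l*a*b) - d*h + e*f, -(l*a*c) - e*h + f*g, 0, 0, 0, 0, 0, 0, 0] := by
  ext j
  fin_cases j <;>
    simp [tomSyzygyRows, vecMul, dotProduct, Fin.sum_univ_succ] <;> ring

theorem tom_koszul_syzygy_combination_general (R : Type*) [CommRing R]
    (a b c d e f g h i l : MvPolynomial (Fin 10) R)
    (M₁ : Matrix (Fin 9) (Fin 16) (MvPolynomial (Fin 10) R))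
    (hM₁ : M₁ = (!![0, a, b, d, e, 0, 0, 0, 0;
      -a, 0, c, e, g, 0, 0, 0, 0;
      -b, -c, 0, f, h, 0, 0, 0, 0;
      -d, -e, -f, 0, -(l*a), 0, 0, 0, 0;
      -e, -g, -h, l*a, 0, 0, 0, 0, 0;
      -h, 0, 0, l*c, 0, 0, g, -e, 0;
      f, -h, 0, -(l*b), l*c, -g, 0, d, 0;
      0, f, 0, 0, -(l*b), e, -d, 0, 0;
      i, 0, 0, 0, 0, 0, -h, f, -(l*c);
      0, i, 0, 0, 0, h, -f, 0, l*b;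
      0, h, i, 0, -(l*c), 0, e, -d, -(l*a);
      0, 0, 0, i, 0, 0, -c, b, -h;
      0, 0, 0, 0, i, c, -b, 0, f;
      0, -b, 0, 0, f, -a, 0, 0, d;
      0, -c, 0, 0, h, 0, -a, 0, e;
      c, 0, 0, -h, 0, 0, 0, -a, g] :
        Matrix (Fin 16) (Fin 9) (MvPolynomial (Fin 10) R))ᵀ)
    (v : Fin 16 → MvPolynomial (Fin 10) R)
    (hv : v = ![-(l*c), l*b, 0, 0, 0, d, e, g, 0, 0, 0, 0, 0, 0, 0, 0])
    : ∀ j : Fin 9, ∑ r : Fin 16, v r * M₁ j r =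
      ![-(l*a*b) - d*h + e*f, -(l*a*c) - e*h + f*g, 0, 0, 0, 0, 0, 0, 0] j := by
  subst hM₁ hv
  exact congrFun (vecMul_tomSyzygyRows a b c d e f g h i l)

/-- For the Tom unprojection data, the vector
`v = (−λc, λb, 0, 0, 0, d, e, g, 0, …, 0)` expresses the Koszul syzygy between
the generators `L₁ = λac+eh−fg` and `L₂ = −λab−dh+ef`: the combination
`Σ_r v_r · c_r` of the 16 columns of `M₁` is the vector
`(−λab−dh+ef, −λac−eh+fg, 0, …, 0)`. -/
theorem tom_koszul_syzygy_combination (R : Type*) [CommRing R]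
    (a b c d e f g h i l : MvPolynomial (Fin 10) R)
    (hvars : (a, b, c, d, e, f, g, h, i, l) =
      (X 0, X 1, X 2, X 3, X 4, X 5, X 6, X 7, X 8, X 9))
    (L : Fin 9 → MvPolynomial (Fin 10) R)
    (hL : L = ![l*a*c + e*h - f*g, -(l*a*b) - d*h + e*f, l*a^2 + d*g - e^2,
      a*h - b*g + c*e, -(a*f) + b*e - c*d, l*b^2 + d*i - f^2,
      l*b*c + e*i - f*h, l*c^2 + g*i - h^2, a*i - b*h + c*f])
    (M₁ : Matrix (Fin 9) (Fin 16) (MvPolynomial (Fin 10) R))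
    (hM₁ : M₁ = (!![0, a, b, d, e, 0, 0, 0, 0;
      -a, 0, c, e, g, 0, 0, 0, 0;
      -b, -c, 0, f, h, 0, 0, 0, 0;
      -d, -e, -f, 0, -(l*a), 0, 0, 0, 0;
      -e, -g, -h, l*a, 0, 0, 0, 0, 0;
      -h, 0, 0, l*c, 0, 0, g, -e, 0;
      f, -h, 0, -(l*b), l*c, -g, 0, d, 0;
      0, f, 0, 0, -(l*b), e, -d, 0, 0;
      i, 0, 0, 0, 0, 0, -h, f, -(l*c);
      0, i, 0, 0, 0, h, -f, 0, l*b;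
      0, h, i, 0, -(l*c), 0, e, -d, -(l*a);
      0, 0, 0, i, 0, 0, -c, b, -h;
      0, 0, 0, 0, i, c, -b, 0, f;
      0, -b, 0, 0, f, -a, 0, 0, d;
      0, -c, 0, 0, h, 0, -a, 0, e;
      c, 0, 0, -h, 0, 0, 0, -a, g] :
        Matrix (Fin 16) (Fin 9) (MvPolynomial (Fin 10) R))ᵀ)
    (v : Fin 16 → MvPolynomial (Fin 10) R)
    (hv : v = ![-(l*c), l*b, 0, 0, 0, d, e, g, 0, 0, 0, 0, 0, 0, 0, 0])
    : ∀ j : Fin 9, ∑ r : Fin 16, v r * M₁ j r =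
      ![-(l*a*b) - d*h + e*f, -(l*a*c) - e*h + f*g, 0, 0, 0, 0, 0, 0, 0] j :=
  tom_koszul_syzygy_combination_general R a b c d e f g h i l M₁ hM₁ v hv
end

section
/- Let R be a commutative ring and a, b, c, d, x, y, z, t ∈ R. Let I_W be the ideal generated by g₁ = ax+by, g₂ = az+bt+cx+dy, g₃ = cz+dt, and set Δ₁ = ad−bc, Δ₂ = xt−yz. Then each of the following six products lies in I_W: Δ₁·(dx−bz), Δ₁·(at−cy), Δ₂·(dx−bz), Δ₂·(at−cy), Δ₁·((dy−bt)+(az−cx)), and Δ₂·((dy−bt)+(az−cx)). (The products of the spinor minors Δ₁, Δ₂ with the nonspinor minors dx−bz, at−cy, and with (dy−bt)+(az−cx), all belong to the isotropy ideal I_W.) -/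
/-!
Write `N = [A | B]` with `A = !![a, b; c, d]`, `B = !![x, y; z, t]`. The quadratic form
`q(u) = (uA)·(uB)` on `R²` is `u₀² g₁ + u₀u₁ g₂ + u₁² g₃`, so it and its polarization take
values in `I_W`. A row `u` of `adj A` satisfies `uA = Δ₁ eᵢ`, so evaluating `q` and its
polarization on rows of `adj A` gives `Δ₁` times the diagonal entries `dx − bz`, `at − cy` of
`adj A · B` and `Δ₁` times the sum `(dy − bt) + (az − cx)` of its off-diagonal entries.
Exchanging `A` and `B` gives the same for `Δ₂`.
-/

open Matrix

section

variable {R : Type*} [CommRing R]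

/-- `u ↦ (u ᵥ* A) ⬝ᵥ (u ᵥ* B)` is the split quadratic form on the row combination `u ᵥ* [A | B]`;
asking for its values to lie in `I`, rather than the entries of `[A | B] J [A | B]ᵀ`, avoids
losing a factor `2` on the diagonal. -/
def Matrix.IsIsotropicMod {m n : Type*} [Fintype m] [Fintype n]
    (I : Ideal R) (A B : Matrix m n R) : Prop :=
  ∀ u : m → R, (u ᵥ* A) ⬝ᵥ (u ᵥ* B) ∈ I

theorem Matrix.adjugate_row_vecMul {n : Type*} [Fintype n] [DecidableEq n]
    (A : Matrix n n R) (i : n) : adjugate A i ᵥ* A = Pi.single i A.det := by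
  rw [← mul_apply_eq_vecMul, adjugate_mul]
  ext j
  simp [Pi.single_apply, one_apply, eq_comm]

theorem Matrix.adjugate_mul_fin_two_of (a b c d x y z t : R) :
    adjugate !![a, b; c, d] * !![x, y; z, t] =
      !![d*x - b*z, d*y - b*t; a*z - c*x, a*t - c*y] := by
  rw [adjugate_fin_two_of]
  ext i j
  fin_cases i <;> fin_cases j <;> simp <;> ring

namespace Matrix.IsIsotropicMod

section Rectangular

variable {m n : Type*} [Fintype m] [Fintype n] {I : Ideal R} {A B : Matrix m n R}

theorem symm (h : IsIsotropicMod I A B) : IsIsotropicMod I B A :=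
  fun u => dotProduct_comm (u ᵥ* B) (u ᵥ* A) ▸ h u

theorem polar_mem (h : IsIsotropicMod I A B) (u v : m → R) :
    (u ᵥ* A) ⬝ᵥ (v ᵥ* B) + (v ᵥ* A) ⬝ᵥ (u ᵥ* B) ∈ I := by
  convert I.sub_mem (I.sub_mem (h (u + v)) (h u)) (h v) using 1
  simp only [add_vecMul, add_dotProduct, dotProduct_add]
  ring

end Rectangular

section Square

variable {n : Type*} [Fintype n] [DecidableEq n] {I : Ideal R} {A B : Matrix n n R}

theorem det_mul_adjugate_mul_diag_mem (h : IsIsotropicMod I A B) (i : n) :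
    A.det * (adjugate A * B) i i ∈ I := by
  simpa [adjugate_row_vecMul, single_dotProduct, mul_apply_eq_vecMul] using h (adjugate A i)

theorem det_mul_adjugate_mul_add_transpose_mem (h : IsIsotropicMod I A B) (i j : n) :
    A.det * ((adjugate A * B) i j + (adjugate A * B) j i) ∈ I := by
  simpa [adjugate_row_vecMul, single_dotProduct, mul_apply_eq_vecMul, mul_add, add_comm]
    using h.polar_mem (adjugate A i) (adjugate A j)

end Square

theorem fin_two {I : Ideal R} {a b c d x y z t : R}
    (h : IsIsotropicMod I !![a, b; c, d] !![x, y; z, t]) :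
    (a*d - b*c) * (d*x - b*z) ∈ I ∧ (a*d - b*c) * (a*t - c*y) ∈ I ∧
      (a*d - b*c) * ((d*y - b*t) + (a*z - c*x)) ∈ I := by
  have h₀₀ := h.det_mul_adjugate_mul_diag_mem 0
  have h₁₁ := h.det_mul_adjugate_mul_diag_mem 1
  have h₀₁ := h.det_mul_adjugate_mul_add_transpose_mem 0 1
  rw [adjugate_mul_fin_two_of, det_fin_two_of] at h₀₀ h₁₁ h₀₁
  exact ⟨by simpa using h₀₀, by simpa using h₁₁, by simpa using h₀₁⟩

end Matrix.IsIsotropicMod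

theorem Matrix.isIsotropicMod_span_fin_two (a b c d x y z t : R) :
    IsIsotropicMod (Ideal.span {a*x + b*y, a*z + b*t + c*x + d*y, c*z + d*t})
      !![a, b; c, d] !![x, y; z, t] := by
  intro u
  have hq : (u ᵥ* !![a, b; c, d]) ⬝ᵥ (u ᵥ* !![x, y; z, t]) =
      u 0 ^ 2 * (a*x + b*y) + u 0 * u 1 * (a*z + b*t + c*x + d*y) + u 1 ^ 2 * (c*z + d*t) := by
    simp only [dotProduct, vecMul, of_apply, cons_val', cons_val_fin_one, Fin.sum_univ_two,
      cons_val_zero, cons_val_one]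
    ring
  rw [hq]
  refine Ideal.add_mem _ (Ideal.add_mem _ ?_ ?_) ?_ <;>
    exact Ideal.mul_mem_left _ _ (Ideal.subset_span (by simp))

end

/-- In a commutative ring `R`, for the isotropy ideal
`I_W = (ax+by, az+bt+cx+dy, cz+dt)` of the `2×4` matrix `[[a,b,x,y],[c,d,z,t]]`,
the products of the spinor minors `Δ₁ = ad−bc`, `Δ₂ = xt−yz` with the nonspinor
minors `dx−bz`, `at−cy` and with `(dy−bt)+(az−cx)` all lie in `I_W`. -/
theorem spinor_times_nonspinor_in_isotropy_ideal (R : Type*) [CommRing R]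
    (a b c d x y z t : R) :
    (a*d - b*c) * (d*x - b*z) ∈ Ideal.span {a*x + b*y, a*z + b*t + c*x + d*y, c*z + d*t} ∧
    (a*d - b*c) * (a*t - c*y) ∈ Ideal.span {a*x + b*y, a*z + b*t + c*x + d*y, c*z + d*t} ∧
    (x*t - y*z) * (d*x - b*z) ∈ Ideal.span {a*x + b*y, a*z + b*t + c*x + d*y, c*z + d*t} ∧
    (x*t - y*z) * (a*t - c*y) ∈ Ideal.span {a*x + b*y, a*z + b*t + c*x + d*y, c*z + d*t} ∧
    (a*d - b*c) * ((d*y - b*t) + (a*z - c*x)) ∈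
      Ideal.span {a*x + b*y, a*z + b*t + c*x + d*y, c*z + d*t} ∧
    (x*t - y*z) * ((d*y - b*t) + (a*z - c*x)) ∈
      Ideal.span {a*x + b*y, a*z + b*t + c*x + d*y, c*z + d*t} := by
  have hAB := isIsotropicMod_span_fin_two a b c d x y z t
  obtain ⟨hA₀₀, hA₁₁, hA₀₁⟩ := hAB.fin_two
  obtain ⟨hB₀₀, hB₁₁, hB₀₁⟩ := hAB.symm.fin_two
  refine ⟨hA₀₀, hA₁₁, ?_, ?_, hA₀₁, ?_⟩
  · convert hB₁₁ using 2; ring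
  · convert hB₀₀ using 2; ring
  · convert neg_mem hB₀₁ using 1; ring
end

section
/- Let R be a commutative ring and a, b, c, d, x, y, z, t ∈ R. Let I_W be the ideal generated by g₁ = ax+by, g₂ = az+bt+cx+dy, g₃ = cz+dt, and set Δ₁ = ad−bc, Δ₂ = xt−yz. Then Δ₁·(Δ₁Δ₂ − (az−cx)²) ∈ I_W and Δ₂·(Δ₁Δ₂ − (az−cx)²) ∈ I_W. (This is the Plücker-type relation exhibiting Δ₁Δ₂ as the square (az−cx)² on each component of the variety of isotropic 2×4 matrices, and shows the Plücker image of OGr(2,4) is the conic XZ = Y².) -/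
/-!
Write `N = [A | B]` with `A = [[a,b],[c,d]]` and `B = [[x,y],[z,t]]`. Isotropy says that `A Bᵀ`
is skew-symmetric, so modulo `I_W` it is `s J` with `s = az + bt` and `J = [[0,1],[-1,0]]`.
Taking determinants gives `Δ₁Δ₂ ≡ s²`, and multiplying by the adjugate of `A` gives
`Δ₁ Bᵀ ≡ s · adj(A) J`, whence `Δ₁ (az − cx) ≡ Δ₁ s`. Therefore `Δ₁ (az − cx)² ≡ Δ₁ s² ≡ Δ₁ · Δ₁Δ₂`.
The statement for `Δ₂` follows by exchanging the roles of `A` and `B`.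
-/

section Isotropic

variable {S : Type*} [CommRing S] {a b c d x y z t : S}

theorem spinorMinor_mul_spinorMinor_eq_sq (h₁ : a*x + b*y = 0)
    (h₂ : a*z + b*t + c*x + d*y = 0) :
    (a*d - b*c) * (x*t - y*z) = (a*z + b*t)^2 := by
  -- `det (A Bᵀ) = g₁g₃ - s (cx + dy)`
  linear_combination (c*z + d*t) * h₁ - (a*z + b*t) * h₂

theorem spinorMinor_mul_plucker_eq (h₁ : a*x + b*y = 0)
    (h₂ : a*z + b*t + c*x + d*y = 0) (h₃ : c*z + d*t = 0) :
    (a*d - b*c) * (a*z - c*x) = (a*d - b*c) * (a*z + b*t) := by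
  have hx : (a*d - b*c) * x = b * (a*z + b*t) := by linear_combination d * h₁ - b * h₂
  have hz : (a*d - b*c) * z = d * (a*z + b*t) := by linear_combination -b * h₃
  linear_combination a * hz - c * hx

theorem spinorMinor_mul_sub_sq_eq_zero (h₁ : a*x + b*y = 0)
    (h₂ : a*z + b*t + c*x + d*y = 0) (h₃ : c*z + d*t = 0) :
    (a*d - b*c) * ((a*d - b*c) * (x*t - y*z) - (a*z - c*x)^2) = 0 := by
  have hp := spinorMinor_mul_plucker_eq h₁ h₂ h₃
  rw [spinorMinor_mul_spinorMinor_eq_sq h₁ h₂]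
  linear_combination -(a*z + b*t + (a*z - c*x)) * hp

end Isotropic

/-- In a commutative ring `R`, for the isotropy ideal
`I_W = (ax+by, az+bt+cx+dy, cz+dt)` of the `2×4` matrix `[[a,b,x,y],[c,d,z,t]]`
and the spinor minors `Δ₁ = ad−bc`, `Δ₂ = xt−yz`, the Plücker-type relations
`Δ₁·(Δ₁Δ₂ − (az−cx)²) ∈ I_W` and `Δ₂·(Δ₁Δ₂ − (az−cx)²) ∈ I_W` hold. -/
theorem spinor_square_relation_in_isotropy_ideal (R : Type*) [CommRing R]
    (a b c d x y z t : R) :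
    (a*d - b*c) * ((a*d - b*c) * (x*t - y*z) - (a*z - c*x)^2) ∈
      Ideal.span {a*x + b*y, a*z + b*t + c*x + d*y, c*z + d*t} ∧
    (x*t - y*z) * ((a*d - b*c) * (x*t - y*z) - (a*z - c*x)^2) ∈
      Ideal.span {a*x + b*y, a*z + b*t + c*x + d*y, c*z + d*t} := by
  set I := Ideal.span {a*x + b*y, a*z + b*t + c*x + d*y, c*z + d*t}
  let π := Ideal.Quotient.mk I
  have vanish {g : R} (hg : g ∈ ({a*x + b*y, a*z + b*t + c*x + d*y, c*z + d*t} : Set R)) :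
      π g = 0 :=
    Ideal.Quotient.eq_zero_iff_mem.mpr (Ideal.subset_span hg)
  have h₁ : π a * π x + π b * π y = 0 := by simpa using vanish (g := a*x + b*y) (by simp)
  have h₂ : π a * π z + π b * π t + π c * π x + π d * π y = 0 := by
    simpa using vanish (g := a*z + b*t + c*x + d*y) (by simp)
  have h₃ : π c * π z + π d * π t = 0 := by simpa using vanish (g := c*z + d*t) (by simp)
  constructor
  · rw [← Ideal.Quotient.eq_zero_iff_mem]
    simpa using spinorMinor_mul_sub_sq_eq_zero h₁ h₂ h₃
  · rw [← Ideal.Quotient.eq_zero_iff_mem]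
    -- exchanging `A` and `B` preserves isotropy and sends `az - cx` to its negative
    have := spinorMinor_mul_sub_sq_eq_zero (a := π x) (b := π y) (c := π z) (d := π t)
      (x := π a) (y := π b) (z := π c) (t := π d)
      (by linear_combination h₁) (by linear_combination h₂) (by linear_combination h₃)
    simp only [map_mul, map_sub, map_pow]
    linear_combination this
end

section
/- Let K be a field of characteristic ≠ 2 and S = K[a,b,c,d,x,y,z,t] the polynomial ring in 8 variables. Let I_W ⊂ S be the ideal generated by g₁ = ax+by, g₂ = az+bt+cx+dy, g₃ = cz+dt, and set Δ₁ = ad−bc, Δ₂ = xt−yz. Then Δ₁Δ₂ − (az−cx)² ∉ I_W, even though Δ₁·(Δ₁Δ₂ − (az−cx)²) ∈ I_W. -/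
/-!
Membership of `Δ₁ · (Δ₁Δ₂ − (az − cx)²)` is an explicit polynomial identity, valid in every
commutative ring. Non-membership is seen at the point `N = [[1,1,0,0],[0,0,-1,1]]`: it satisfies
the isotropy conditions, but there `Δ₁ = Δ₂ = 0` and `az − cx = -1`, so `Δ₁Δ₂ − (az − cx)² = -1`.
-/

open MvPolynomial

theorem Ideal.notMem_span_of_map_eq_zero {R S : Type*} [Semiring R] [Semiring S] (φ : R →+* S)
    {s : Set R} {p : R} (hs : ∀ q ∈ s, φ q = 0) (hp : φ p ≠ 0) : p ∉ Ideal.span s := fun h =>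
  hp <| RingHom.mem_ker.mp <| Ideal.span_le.mpr (fun q hq => RingHom.mem_ker.mpr (hs q hq)) h

section SpinorRelation

variable {R : Type*} [CommRing R] (a b c d x y z t : R)

theorem spinor_relation_mul_det_eq :
    (a*d - b*c) * ((a*d - b*c) * (x*t - y*z) - (a*z - c*x)^2) =
      (-(c^2*d*x) - 3*(b*c*d*t) - 4*(b*c^2*z) + a*d^2*t + 3*(a*c*d*z)) * (a*x + b*y)
      + (b*c^2*x + a*b*d*t + a*b*c*z - a^2*d*z) * (a*z + b*t + c*x + d*y)
      + (3*(b^2*c*y) - 2*(a*b*d*y) - a*b^2*t) * (c*z + d*t) := by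
  ring

theorem spinor_relation_mul_det_mem_span :
    (a*d - b*c) * ((a*d - b*c) * (x*t - y*z) - (a*z - c*x)^2) ∈
      Ideal.span {a*x + b*y, a*z + b*t + c*x + d*y, c*z + d*t} := by
  rw [spinor_relation_mul_det_eq]
  refine add_mem (add_mem ?_ ?_) ?_ <;>
    exact Ideal.mul_mem_left _ _ (Ideal.subset_span (by simp))

end SpinorRelation

theorem spinor_relation_notMem_span (K : Type*) [CommRing K] [Nontrivial K] :
    (X 0 * X 3 - X 1 * X 2) * (X 4 * X 7 - X 5 * X 6) - (X 0 * X 6 - X 2 * X 4)^2 ∉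
      Ideal.span ({X 0 * X 4 + X 1 * X 5, X 0 * X 6 + X 1 * X 7 + X 2 * X 4 + X 3 * X 5,
        X 2 * X 6 + X 3 * X 7} : Set (MvPolynomial (Fin 8) K)) := by
  refine Ideal.notMem_span_of_map_eq_zero (eval ![1, 1, 0, 0, 0, 0, -1, 1]) ?_ ?_
  · rintro q (rfl | rfl | rfl) <;> simp
  · simp

theorem spinor_square_relation_needs_cancellation_general (K : Type*) [Field K]
    (a b c d x y z t : MvPolynomial (Fin 8) K)
    (hvars : (a, b, c, d, x, y, z, t) = (X 0, X 1, X 2, X 3, X 4, X 5, X 6, X 7)) :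
    (a*d - b*c) * (x*t - y*z) - (a*z - c*x)^2 ∉
      Ideal.span {a*x + b*y, a*z + b*t + c*x + d*y, c*z + d*t} ∧
    (a*d - b*c) * ((a*d - b*c) * (x*t - y*z) - (a*z - c*x)^2) ∈
      Ideal.span {a*x + b*y, a*z + b*t + c*x + d*y, c*z + d*t} := by
  refine ⟨?_, spinor_relation_mul_det_mem_span a b c d x y z t⟩
  simp only [Prod.mk.injEq] at hvars
  obtain ⟨rfl, rfl, rfl, rfl, rfl, rfl, rfl, rfl⟩ := hvars
  exact spinor_relation_notMem_span K

/-- In the polynomial ring `S = K[a,b,c,d,x,y,z,t]` over a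
field of characteristic `≠ 2`, with `I_W = (ax+by, az+bt+cx+dy, cz+dt)`,
`Δ₁ = ad−bc`, `Δ₂ = xt−yz`, the element `Δ₁Δ₂ − (az−cx)²` does NOT lie in
`I_W`, even though `Δ₁·(Δ₁Δ₂ − (az−cx)²) ∈ I_W`. -/
theorem spinor_square_relation_needs_cancellation (K : Type*) [Field K]
    (hchar : (2 : K) ≠ 0)
    (a b c d x y z t : MvPolynomial (Fin 8) K)
    (hvars : (a, b, c, d, x, y, z, t) = (X 0, X 1, X 2, X 3, X 4, X 5, X 6, X 7)) :
    (a*d - b*c) * (x*t - y*z) - (a*z - c*x)^2 ∉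
      Ideal.span {a*x + b*y, a*z + b*t + c*x + d*y, c*z + d*t} ∧
    (a*d - b*c) * ((a*d - b*c) * (x*t - y*z) - (a*z - c*x)^2) ∈
      Ideal.span {a*x + b*y, a*z + b*t + c*x + d*y, c*z + d*t} :=
  spinor_square_relation_needs_cancellation_general K a b c d x y z t hvars
end

section
/- Let K be a field of characteristic ≠ 2 and S = K[a,b,c,d,x,y,z,t] the polynomial ring in 8 variables. Then the three polynomials g₁ = ax+by, g₂ = az+bt+cx+dy, g₃ = cz+dt form a regular sequence in S; equivalently, the subscheme W ⊂ 𝔸⁸ they define is a complete intersection of codimension 3. -/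
open MvPolynomial

namespace IsotropyRegSeqAux

noncomputable section

variable {K : Type*} [Field K]

def w : Fin 8 → ℕ := ![0, 1, 3, 2, 1, 1, 0, 2]

def wd (d : Fin 8 →₀ ℕ) : ℕ := Finsupp.weight w d

lemma wd_add (d₁ d₂ : Fin 8 →₀ ℕ) : wd (d₁ + d₂) = wd d₁ + wd d₂ := by
  simp [wd]

abbrev whc (n : ℕ) (f : MvPolynomial (Fin 8) K) : MvPolynomial (Fin 8) K :=
  weightedHomogeneousComponent w n f

lemma wd_single (i : Fin 8) : wd (Finsupp.single i 1) = w i := by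
  simp [wd, Finsupp.weight_apply, Finsupp.sum_single_index]

lemma coeff_whc (n : ℕ) (f : MvPolynomial (Fin 8) K) (d : Fin 8 →₀ ℕ) :
    coeff d (whc n f) = if wd d = n then coeff d f else 0 := by
  classical
  exact coeff_weightedHomogeneousComponent n f d

lemma whc_add (n : ℕ) (f g : MvPolynomial (Fin 8) K) :
    whc n (f + g) = whc n f + whc n g := map_add _ _ _

lemma whc_sub (n : ℕ) (f g : MvPolynomial (Fin 8) K) :
    whc n (f - g) = whc n f - whc n g := map_sub _ _ _

lemma whc_zero (n : ℕ) : whc n (0 : MvPolynomial (Fin 8) K) = 0 := map_zero _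

lemma whc_eq_zero_of_lt {n : ℕ} {f : MvPolynomial (Fin 8) K}
    (h : ∀ d ∈ f.support, wd d < n) : whc n f = 0 := by
  ext d
  rw [coeff_whc, coeff_zero]
  split_ifs with hd
  · by_contra hc
    exact Nat.ne_of_lt (h d (mem_support_iff.mpr hc)) hd
  · rfl

lemma whc_idem (n : ℕ) (f : MvPolynomial (Fin 8) K) : whc n (whc n f) = whc n f :=
  (weightedHomogeneousComponent_isWeightedHomogeneous n f).weightedHomogeneousComponent_same

lemma wd_eq_of_mem_whc_support {n : ℕ} {f : MvPolynomial (Fin 8) K} {d : Fin 8 →₀ ℕ}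
    (hd : d ∈ (whc n f).support) : wd d = n :=
  weightedHomogeneousComponent_isWeightedHomogeneous n f (mem_support_iff.mp hd)

/-- strict bound on the "rest" after removing top component -/
lemma rest_lt {M : ℕ} {g : MvPolynomial (Fin 8) K}
    (hg : ∀ d ∈ g.support, wd d ≤ M) :
    ∀ d ∈ (g - whc M g).support, wd d < M := by
  intro d hd
  rw [mem_support_iff, coeff_sub, coeff_whc] at hd
  by_cases h : wd d = M
  · rw [if_pos h, sub_self] at hd; exact absurd rfl hd
  · rw [if_neg h, sub_zero] at hd
    exact lt_of_le_of_ne (hg d (mem_support_iff.mpr hd)) h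

lemma keyMul {f g : MvPolynomial (Fin 8) K} {N M : ℕ}
    (hf : ∀ d ∈ f.support, wd d ≤ N) (hg : ∀ d ∈ g.support, wd d ≤ M) :
    whc (N + M) (f * g) = whc N f * whc M g := by
  classical
  have hdecomp : f * g =
      whc N f * whc M g + (whc N f * (g - whc M g) + (f - whc N f) * g) := by ring
  rw [hdecomp, whc_add, whc_add]
  have h1 : whc (N + M) (whc N f * whc M g) = whc N f * whc M g :=
    ((weightedHomogeneousComponent_isWeightedHomogeneous N f).mul
      (weightedHomogeneousComponent_isWeightedHomogeneous M g)).weightedHomogeneousComponent_same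
  have h2 : whc (N + M) (whc N f * (g - whc M g)) = 0 := by
    apply whc_eq_zero_of_lt
    intro d hd
    obtain ⟨d₁, hd₁, d₂, hd₂, rfl⟩ := Finset.mem_add.mp (support_mul _ _ hd)
    have e1 : wd d₁ = N := wd_eq_of_mem_whc_support hd₁
    have e2 : wd d₂ < M := rest_lt hg d₂ hd₂
    rw [wd_add]
    omega
  have h3 : whc (N + M) ((f - whc N f) * g) = 0 := by
    apply whc_eq_zero_of_lt
    intro d hd
    obtain ⟨d₁, hd₁, d₂, hd₂, rfl⟩ := Finset.mem_add.mp (support_mul _ _ hd)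
    have e1 : wd d₁ < N := rest_lt hf d₁ hd₁
    have e2 : wd d₂ ≤ M := hg d₂ hd₂
    rw [wd_add]
    omega
  rw [h1, h2, h3, add_zero, add_zero]

/-- bound for products -/
lemma bnd_mul {f g : MvPolynomial (Fin 8) K} {N M : ℕ}
    (hf : ∀ d ∈ f.support, wd d ≤ N) (hg : ∀ d ∈ g.support, wd d ≤ M) :
    ∀ d ∈ (f * g).support, wd d ≤ N + M := by
  intro d hd
  obtain ⟨d₁, hd₁, d₂, hd₂, rfl⟩ := Finset.mem_add.mp (support_mul _ _ hd)
  have := hf d₁ hd₁; have := hg d₂ hd₂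
  rw [wd_add]
  omega

lemma bnd_step {f : MvPolynomial (Fin 8) K} {k n E : ℕ}
    (hb : ∀ d ∈ f.support, wd d + k ≤ E + 1) (hnk : n + k = E + 1) (h0 : whc n f = 0) :
    ∀ d ∈ f.support, wd d + k ≤ E := by
  intro d hd
  have h1 := hb d hd
  by_cases he : wd d + k = E + 1
  · exfalso
    have hwd : wd d = n := by omega
    have := coeff_whc (K := K) n f d
    rw [h0, coeff_zero, if_pos hwd] at this
    exact mem_support_iff.mp hd this.symm
  · omega

lemma eq_zero_of_bnd_lt {f : MvPolynomial (Fin 8) K} {k N : ℕ}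
    (hb : ∀ d ∈ f.support, wd d + k ≤ N) (hN : N < k) : f = 0 := by
  rw [← support_eq_empty]
  by_contra h
  obtain ⟨d, hd⟩ := Finset.nonempty_of_ne_empty h
  have := hb d hd; omega

lemma whc_eq_zero_of_bnd {f : MvPolynomial (Fin 8) K} {N n : ℕ}
    (hb : ∀ d ∈ f.support, wd d ≤ N) (hn : N < n) : whc n f = 0 :=
  whc_eq_zero_of_lt fun d hd => lt_of_le_of_lt (hb d hd) hn

lemma X_as_monomial (i : Fin 8) :
    (X i : MvPolynomial (Fin 8) K) = monomial (Finsupp.single i 1) 1 := rfl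

lemma X_mul_X (i j : Fin 8) :
    (X i * X j : MvPolynomial (Fin 8) K)
      = monomial (Finsupp.single i 1 + Finsupp.single j 1) 1 := by
  rw [X_as_monomial, X_as_monomial, monomial_mul, one_mul]

lemma whc_monomial_mul (s : Fin 8 →₀ ℕ) (u : MvPolynomial (Fin 8) K) (i : ℕ) :
    whc (wd s + i) (monomial s (1:K) * u) = monomial s (1:K) * whc i u := by
  classical
  ext d
  rw [coeff_whc, coeff_monomial_mul', coeff_monomial_mul', coeff_whc]
  by_cases hs : s ≤ d
  · simp only [if_pos hs, one_mul]
    have hd : wd d = wd s + wd (d - s) := by rw [← wd_add, add_tsub_cancel_of_le hs]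
    by_cases hi : wd (d - s) = i
    · rw [if_pos hi, if_pos (by omega)]
    · rw [if_neg hi, if_neg (by omega)]
  · simp only [if_neg hs, ite_self]

lemma whc_monomial_mul_lt {s : Fin 8 →₀ ℕ} {j : ℕ} (h : j < wd s)
    (u : MvPolynomial (Fin 8) K) : whc j (monomial s (1:K) * u) = 0 := by
  classical
  ext d
  rw [coeff_whc, coeff_monomial_mul', coeff_zero]
  split_ifs with h1 h2
  · exfalso
    have hd : wd d = wd s + wd (d - s) := by rw [← wd_add, add_tsub_cancel_of_le h2]
    omega
  · rfl
  · rfl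

lemma monStep {i j : Fin 8} {T : Set (Fin 8 →₀ ℕ)} (hT : ∀ m ∈ T, m i = 0 ∧ m j = 0)
    {P : MvPolynomial (Fin 8) K}
    (h : X i * (X j * P) ∈
      Ideal.span ((fun m => (monomial m (1:K) : MvPolynomial (Fin 8) K)) '' T)) :
    P ∈ Ideal.span ((fun m => (monomial m (1:K) : MvPolynomial (Fin 8) K)) '' T) := by
  classical
  rw [mem_ideal_span_monomial_image] at h ⊢
  intro d hd
  have hmem : addLeftEmbedding (Finsupp.single i 1)
      (addLeftEmbedding (Finsupp.single j 1) d) ∈ (X i * (X j * P)).support := by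
    rw [support_X_mul, support_X_mul]
    exact Finset.mem_map_of_mem _ (Finset.mem_map_of_mem _ hd)
  obtain ⟨m, hmT, hle⟩ := h _ hmem
  refine ⟨m, hmT, ?_⟩
  have h0 := hT m hmT
  rw [Finsupp.le_def] at hle ⊢
  intro k
  have hk := hle k
  simp only [addLeftEmbedding_apply, Finsupp.add_apply] at hk
  by_cases hki : k = i
  · subst hki; rw [h0.1]; exact Nat.zero_le _
  · by_cases hkj : k = j
    · subst hkj; rw [h0.2]; exact Nat.zero_le _
    · simpa [Finsupp.single_apply, Ne.symm hki, Ne.symm hkj] using hk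

lemma whc_homogmul {u g Mg : MvPolynomial (Fin 8) K} {k N : ℕ}
    (hu : ∀ d ∈ u.support, wd d + k = N)
    (hbg : ∀ d ∈ g.support, wd d ≤ k) (hMg : whc k g = Mg) :
    whc N (u * g) = u * Mg := by
  by_cases hu0 : u = 0
  · rw [hu0, zero_mul, zero_mul, whc_zero]
  · obtain ⟨d₀, hd₀⟩ := Finset.nonempty_of_ne_empty
      (fun hh => hu0 (support_eq_empty.mp hh))
    have hkN : k ≤ N := by have := hu d₀ hd₀; omega
    have hbu : ∀ d ∈ u.support, wd d ≤ N - k := fun d hd => by have := hu d hd; omega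
    have huh : whc (N - k) u = u := by
      apply IsWeightedHomogeneous.weightedHomogeneousComponent_same
      intro d hc
      have h2 := hu d (mem_support_iff.mpr hc)
      show wd d = N - k
      omega
    have hkm := keyMul (K := K) hbu hbg
    rw [Nat.sub_add_cancel hkN] at hkm
    rw [hkm, huh, hMg]

lemma refine1 {s : Fin 8 →₀ ℕ} {k : ℕ} (hs : wd s = k) (u : MvPolynomial (Fin 8) K) (N : ℕ) :
    ∃ u', whc N (u * monomial s 1) = u' * monomial s 1 ∧
      ∀ d ∈ u'.support, wd d + k = N := by
  rcases le_or_gt k N with hk | hk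
  · refine ⟨whc (N - k) u, ?_, ?_⟩
    · have hN : k + (N - k) = N := by omega
      rw [mul_comm]
      calc whc N (monomial s 1 * u)
          = whc (wd s + (N - k)) (monomial s 1 * u) := by rw [hs, hN]
        _ = monomial s 1 * whc (N - k) u := whc_monomial_mul s u (N - k)
        _ = whc (N - k) u * monomial s 1 := mul_comm _ _
    · intro d hd
      have := wd_eq_of_mem_whc_support hd; omega
  · refine ⟨0, ?_, by simp⟩
    rw [mul_comm, whc_monomial_mul_lt (by omega), zero_mul]

/-! ### The three polynomials and their leading monomials -/

def g1 : MvPolynomial (Fin 8) K := X 0 * X 4 + X 1 * X 5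
def g2 : MvPolynomial (Fin 8) K := X 0 * X 6 + X 1 * X 7 + X 2 * X 4 + X 3 * X 5
def g3 : MvPolynomial (Fin 8) K := X 2 * X 6 + X 3 * X 7

def m1 : Fin 8 →₀ ℕ := Finsupp.single 1 1 + Finsupp.single 5 1
def m2 : Fin 8 →₀ ℕ := Finsupp.single 2 1 + Finsupp.single 4 1
def m3 : Fin 8 →₀ ℕ := Finsupp.single 3 1 + Finsupp.single 7 1

lemma w0 : w 0 = 0 := rfl
lemma w1 : w 1 = 1 := rfl
lemma w2 : w 2 = 3 := rfl
lemma w3 : w 3 = 2 := rfl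
lemma w4 : w 4 = 1 := rfl
lemma w5 : w 5 = 1 := rfl
lemma w6 : w 6 = 0 := rfl
lemma w7 : w 7 = 2 := rfl

lemma wd_m1 : wd m1 = 2 := by rw [m1, wd_add, wd_single, wd_single]; rfl
lemma wd_m2 : wd m2 = 4 := by rw [m2, wd_add, wd_single, wd_single]; rfl
lemma wd_m3 : wd m3 = 4 := by rw [m3, wd_add, wd_single, wd_single]; rfl

lemma m1_vals : m1 2 = 0 ∧ m1 4 = 0 ∧ m1 3 = 0 ∧ m1 7 = 0 := by
  refine ⟨?_, ?_, ?_, ?_⟩ <;>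
    simp [m1, Finsupp.single_apply]
lemma m2_vals : m2 1 = 0 ∧ m2 5 = 0 ∧ m2 3 = 0 ∧ m2 7 = 0 := by
  refine ⟨?_, ?_, ?_, ?_⟩ <;>
    simp [m2, Finsupp.single_apply]

lemma M1_eq : (monomial m1 1 : MvPolynomial (Fin 8) K) = X 1 * X 5 := by
  rw [X_mul_X, m1]
lemma M2_eq : (monomial m2 1 : MvPolynomial (Fin 8) K) = X 2 * X 4 := by
  rw [X_mul_X, m2]
lemma M3_eq : (monomial m3 1 : MvPolynomial (Fin 8) K) = X 3 * X 7 := by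
  rw [X_mul_X, m3]

lemma M1_ne : (monomial m1 1 : MvPolynomial (Fin 8) K) ≠ 0 := by
  rw [Ne, monomial_eq_zero]; exact one_ne_zero
lemma M2_ne : (monomial m2 1 : MvPolynomial (Fin 8) K) ≠ 0 := by
  rw [Ne, monomial_eq_zero]; exact one_ne_zero

lemma isWH_XX (i j : Fin 8) :
    IsWeightedHomogeneous w (X i * X j : MvPolynomial (Fin 8) K) (w i + w j) :=
  (isWeightedHomogeneous_X K w i).mul (isWeightedHomogeneous_X K w j)

lemma bnd_of_WH {f : MvPolynomial (Fin 8) K} {k N : ℕ}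
    (hf : IsWeightedHomogeneous w f k) (hk : k ≤ N) :
    ∀ d ∈ f.support, wd d ≤ N := fun d hd => by
  have h := hf (mem_support_iff.mp hd)
  show wd d ≤ N
  rw [wd, h]; exact hk

lemma bnd_add {f g : MvPolynomial (Fin 8) K} {N : ℕ}
    (hf : ∀ d ∈ f.support, wd d ≤ N) (hg : ∀ d ∈ g.support, wd d ≤ N) :
    ∀ d ∈ (f + g).support, wd d ≤ N := by
  classical
  intro d hd
  rcases Finset.mem_union.mp (support_add hd) with h | h
  · exact hf d h
  · exact hg d h

lemma bnd_g1 : ∀ d ∈ (g1 (K := K)).support, wd d ≤ 2 := by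
  rw [g1]
  exact bnd_add (bnd_of_WH (isWH_XX 0 4) (by rw [w0, w4]; try omega))
    (bnd_of_WH (isWH_XX 1 5) (by rw [w1, w5]; try omega))

lemma bnd_g2 : ∀ d ∈ (g2 (K := K)).support, wd d ≤ 4 := by
  rw [g2]
  exact bnd_add (bnd_add (bnd_add
    (bnd_of_WH (isWH_XX 0 6) (by rw [w0, w6]; try omega))
    (bnd_of_WH (isWH_XX 1 7) (by rw [w1, w7]; try omega)))
    (bnd_of_WH (isWH_XX 2 4) (by rw [w2, w4]; try omega)))
    (bnd_of_WH (isWH_XX 3 5) (by rw [w3, w5]; try omega))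

lemma bnd_g3 : ∀ d ∈ (g3 (K := K)).support, wd d ≤ 4 := by
  rw [g3]
  exact bnd_add (bnd_of_WH (isWH_XX 2 6) (by rw [w2, w6]; try omega))
    (bnd_of_WH (isWH_XX 3 7) (by rw [w3, w7]; try omega))

lemma whc_g1 : whc 2 (g1 (K := K)) = monomial m1 1 := by
  rw [g1, whc_add]
  have h1 : whc 2 (X 0 * X 4 : MvPolynomial (Fin 8) K) = 0 :=
    (isWH_XX 0 4).weightedHomogeneousComponent_ne 2 (by rw [w0, w4]; try omega)
  have h2 : whc 2 (X 1 * X 5 : MvPolynomial (Fin 8) K) = X 1 * X 5 := by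
    have h := (isWH_XX (K := K) 1 5)
    rw [show w 1 + w 5 = 2 from rfl] at h
    exact h.weightedHomogeneousComponent_same
  rw [h1, h2, zero_add, M1_eq]

lemma whc_g2 : whc 4 (g2 (K := K)) = monomial m2 1 := by
  rw [g2, whc_add, whc_add, whc_add]
  have h1 : whc 4 (X 0 * X 6 : MvPolynomial (Fin 8) K) = 0 :=
    (isWH_XX 0 6).weightedHomogeneousComponent_ne 4 (by rw [w0, w6]; try omega)
  have h2 : whc 4 (X 1 * X 7 : MvPolynomial (Fin 8) K) = 0 :=
    (isWH_XX 1 7).weightedHomogeneousComponent_ne 4 (by rw [w1, w7]; try omega)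
  have h3 : whc 4 (X 2 * X 4 : MvPolynomial (Fin 8) K) = X 2 * X 4 := by
    have h := (isWH_XX (K := K) 2 4)
    rw [show w 2 + w 4 = 4 from rfl] at h
    exact h.weightedHomogeneousComponent_same
  have h4 : whc 4 (X 3 * X 5 : MvPolynomial (Fin 8) K) = 0 :=
    (isWH_XX 3 5).weightedHomogeneousComponent_ne 4 (by rw [w3, w5]; try omega)
  rw [h1, h2, h3, h4, M2_eq]; ring

lemma whc_g3 : whc 4 (g3 (K := K)) = monomial m3 1 := by
  rw [g3, whc_add]
  have h1 : whc 4 (X 2 * X 6 : MvPolynomial (Fin 8) K) = 0 :=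
    (isWH_XX 2 6).weightedHomogeneousComponent_ne 4 (by rw [w2, w6]; try omega)
  have h2 : whc 4 (X 3 * X 7 : MvPolynomial (Fin 8) K) = X 3 * X 7 := by
    have h := (isWH_XX (K := K) 3 7)
    rw [show w 3 + w 7 = 4 from rfl] at h
    exact h.weightedHomogeneousComponent_same
  rw [h1, h2, zero_add, M3_eq]

lemma g1_ne : (g1 (K := K)) ≠ 0 := fun h => M1_ne (K := K) (by rw [← whc_g1, h, whc_zero])

lemma eq_zero_of_bnd0 {f : MvPolynomial (Fin 8) K}
    (hb : ∀ d ∈ f.support, wd d ≤ 0) (h0 : whc 0 f = 0) : f = 0 := by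
  have hwh : IsWeightedHomogeneous w f 0 := fun d hc => by
    have := hb d (mem_support_iff.mpr hc)
    show wd d = 0
    omega
  rw [← hwh.weightedHomogeneousComponent_same]
  exact h0

/-- Key step 2 : `g₂` is a nonzerodivisor modulo `(g₁)`. -/
lemma keyB : ∀ N p, (∀ d ∈ p.support, wd d ≤ N) →
    (g2 (K := K)) * p ∈ Ideal.span {g1 (K := K)} →
    p ∈ Ideal.span {g1 (K := K)} := by
  intro N
  induction N using Nat.strong_induction_on with
  | _ N IH =>
  intro p hp hmem
  obtain ⟨c, hc⟩ := Ideal.mem_span_singleton'.mp hmem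
  -- `hc : c * g1 = g2 * p`; normalize the degree of the coefficient `c`
  have step : ∀ D f, f * g1 = (g2 (K := K)) * p → (∀ d ∈ f.support, wd d + 2 ≤ D) →
      ∃ f', f' * g1 = (g2 (K := K)) * p ∧ ∀ d ∈ f'.support, wd d + 2 ≤ N + 4 := by
    intro D
    induction D using Nat.strong_induction_on with
    | _ D IHD =>
    intro f hf hbf
    rcases le_or_gt D (N + 4) with hD | hD
    · exact ⟨f, hf, fun d hd => le_trans (hbf d hd) hD⟩
    · obtain ⟨E, rfl⟩ : ∃ E, D = E + 5 := ⟨D - 5, by omega⟩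
      have hb0 : ∀ d ∈ f.support, wd d ≤ E + 3 := fun d hd => by
        have := hbf d hd; omega
      have htop : whc (E + 3 + 2) (f * g1) = whc (E + 3) f * monomial m1 1 := by
        rw [keyMul hb0 bnd_g1, whc_g1]
      have e35 : E + 3 + 2 = E + 5 := by omega
      rw [e35] at htop
      have hrhs : whc (E + 5) ((g2 (K := K)) * p) = 0 :=
        whc_eq_zero_of_bnd (bnd_mul bnd_g2 hp) (by omega)
      have h0 : whc (E + 3) f * monomial m1 1 = 0 := by
        rw [← htop, hf, hrhs]
      have hF : whc (E + 3) f = 0 := by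
        rcases mul_eq_zero.mp h0 with h | h
        · exact h
        · exact absurd h M1_ne
      have hbf' : ∀ d ∈ f.support, wd d + 2 ≤ E + 4 := by
        have hb1 : ∀ d ∈ f.support, wd d + 2 ≤ (E + 4) + 1 := fun d hd => by
          have := hbf d hd; omega
        exact bnd_step hb1 (by omega) hF
      exact IHD (E + 4) (by omega) f hf hbf'
  obtain ⟨f, hf, hbf⟩ := step (weightedTotalDegree w c + 2) c hc (fun d hd => by
    have := le_weightedTotalDegree w hd
    have : wd d ≤ weightedTotalDegree w c := this
    omega)
  -- compare top components in degree `N + 4`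
  have hbf0 : ∀ d ∈ f.support, wd d ≤ N + 2 := fun d hd => by
    have := hbf d hd; omega
  have htop : whc (N + 2 + 2) (f * g1) = whc (N + 2) f * monomial m1 1 := by
    rw [keyMul hbf0 bnd_g1, whc_g1]
  have e44 : N + 2 + 2 = 4 + N := by omega
  rw [e44] at htop
  have htop2 : whc (4 + N) ((g2 (K := K)) * p) = monomial m2 1 * whc N p := by
    rw [keyMul bnd_g2 hp, whc_g2]
  have hEq : whc (N + 2) f * monomial m1 1 = monomial m2 1 * whc N p := by
    rw [← htop, ← htop2, hf]
  -- monomial step : `whc N p ∈ (monomial m1 1)`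
  have hPmem : whc N p ∈ Ideal.span
      ((fun m => (monomial m (1:K) : MvPolynomial (Fin 8) K)) '' {m1}) := by
    apply monStep (i := 2) (j := 4)
    · intro m hm
      rw [Set.mem_singleton_iff] at hm
      subst hm
      exact ⟨m1_vals.1, m1_vals.2.1⟩
    · have hXX : X 2 * (X 4 * whc N p) = monomial m2 1 * whc N p := by
        rw [M2_eq]; ring
      rw [hXX, ← hEq, Set.image_singleton]
      exact Ideal.mem_span_singleton'.mpr ⟨whc (N + 2) f, rfl⟩
  rw [Set.image_singleton] at hPmem
  obtain ⟨u, hu⟩ := Ideal.mem_span_singleton'.mp hPmem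
  obtain ⟨u', hu', hbu'⟩ := refine1 wd_m1 u N
  rw [hu, whc_idem] at hu'
  -- `hu' : whc N p = u' * monomial m1 1`
  set p' := p - u' * g1 with hp'def
  have hmul : whc N (u' * g1) = u' * monomial m1 1 :=
    whc_homogmul hbu' bnd_g1 whc_g1
  have hwp' : whc N p' = 0 := by
    rw [hp'def, whc_sub, hmul, ← hu', sub_self]
  have hbp' : ∀ d ∈ p'.support, wd d ≤ N := by
    classical
    intro d hd
    have hd' : d ∈ p.support ∪ (u' * g1).support := by
      have : p' = p + (-(u' * g1)) := by rw [hp'def]; ring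
      rw [this] at hd
      have := support_add hd
      rwa [support_neg] at this
    rcases Finset.mem_union.mp hd' with h | h
    · exact hp d h
    · obtain ⟨d₁, h1, d₂, h2, rfl⟩ := Finset.mem_add.mp (support_mul _ _ h)
      have e1 := hbu' d₁ h1
      have e2 := bnd_g1 (K := K) d₂ h2
      rw [wd_add]; omega
  have hmem' : (g2 (K := K)) * p' ∈ Ideal.span {g1 (K := K)} := by
    have hrw : (g2 (K := K)) * p' = g2 * p - (g2 * u') * g1 := by
      rw [hp'def]; ring
    rw [hrw]
    exact Ideal.sub_mem _ hmem
      (Ideal.mul_mem_left _ _ (Ideal.subset_span (Set.mem_singleton _)))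
  have hp'span : p' ∈ Ideal.span {g1 (K := K)} := by
    rcases Nat.eq_zero_or_pos N with rfl | hN
    · rw [eq_zero_of_bnd0 hbp' hwp']
      exact Ideal.zero_mem _
    · obtain ⟨E, rfl⟩ : ∃ E, N = E + 1 := ⟨N - 1, by omega⟩
      have hb1 : ∀ d ∈ p'.support, wd d + 0 ≤ E + 1 := fun d hd => by
        have := hbp' d hd; omega
      have hb2 := bnd_step hb1 (by omega) hwp'
      exact IH E (by omega) p' (fun d hd => by have := hb2 d hd; omega) hmem'
  have hfin : p = p' + u' * g1 := by rw [hp'def]; ring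
  rw [hfin]
  exact Ideal.add_mem _ hp'span
    (Ideal.mul_mem_left _ _ (Ideal.subset_span (Set.mem_singleton _)))

/-- Key step 3 : `g₃` is a nonzerodivisor modulo `(g₁, g₂)`. -/
lemma keyC : ∀ N p, (∀ d ∈ p.support, wd d ≤ N) →
    (g3 (K := K)) * p ∈ Ideal.span {g1 (K := K), g2 (K := K)} →
    p ∈ Ideal.span {g1 (K := K), g2 (K := K)} := by
  intro N
  induction N using Nat.strong_induction_on with
  | _ N IH =>
  intro p hp hmem
  obtain ⟨c₁, c₂, hc⟩ := Ideal.mem_span_pair.mp hmem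
  -- `hc : c₁ * g1 + c₂ * g2 = g3 * p`; normalize the degrees of the coefficients
  have step : ∀ D f₁ f₂, f₁ * g1 + f₂ * g2 = (g3 (K := K)) * p →
      (∀ d ∈ f₁.support, wd d + 2 ≤ D) → (∀ d ∈ f₂.support, wd d + 4 ≤ D) →
      ∃ f₁' f₂', f₁' * g1 + f₂' * g2 = (g3 (K := K)) * p ∧
        (∀ d ∈ f₁'.support, wd d + 2 ≤ N + 4) ∧
        (∀ d ∈ f₂'.support, wd d + 4 ≤ N + 4) := by
    intro D
    induction D using Nat.strong_induction_on with
    | _ D IHD =>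
    intro f₁ f₂ hf hbf₁ hbf₂
    rcases le_or_gt D (N + 4) with hD | hD
    · exact ⟨f₁, f₂, hf, fun d hd => le_trans (hbf₁ d hd) hD,
        fun d hd => le_trans (hbf₂ d hd) hD⟩
    · obtain ⟨E, rfl⟩ : ∃ E, D = E + 5 := ⟨D - 5, by omega⟩
      have hb₁ : ∀ d ∈ f₁.support, wd d ≤ E + 3 := fun d hd => by
        have := hbf₁ d hd; omega
      have hb₂ : ∀ d ∈ f₂.support, wd d ≤ E + 1 := fun d hd => by
        have := hbf₂ d hd; omega
      have htop₁ : whc (E + 3 + 2) (f₁ * g1) = whc (E + 3) f₁ * monomial m1 1 := by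
        rw [keyMul hb₁ bnd_g1, whc_g1]
      have htop₂ : whc (E + 1 + 4) (f₂ * g2) = whc (E + 1) f₂ * monomial m2 1 := by
        rw [keyMul hb₂ bnd_g2, whc_g2]
      have e1 : E + 3 + 2 = E + 5 := by omega
      have e2 : E + 1 + 4 = E + 5 := by omega
      rw [e1] at htop₁; rw [e2] at htop₂
      have hrhs : whc (E + 5) ((g3 (K := K)) * p) = 0 :=
        whc_eq_zero_of_bnd (bnd_mul bnd_g3 hp) (by omega)
      have h0 : whc (E + 3) f₁ * monomial m1 1 + whc (E + 1) f₂ * monomial m2 1 = 0 := by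
        rw [← htop₁, ← htop₂, ← whc_add, hf, hrhs]
      -- syzygy step : `whc (E+3) f₁` is divisible by `monomial m2 1`
      have hmem₁ : whc (E + 3) f₁ ∈ Ideal.span
          ((fun m => (monomial m (1:K) : MvPolynomial (Fin 8) K)) '' {m2}) := by
        apply monStep (i := 1) (j := 5)
        · intro m hm
          rw [Set.mem_singleton_iff] at hm
          subst hm
          exact ⟨m2_vals.1, m2_vals.2.1⟩
        · have hXX : X 1 * (X 5 * whc (E + 3) f₁)
              = whc (E + 3) f₁ * monomial m1 1 := by
            rw [M1_eq]; ring
          have hEq1 : whc (E + 3) f₁ * monomial m1 1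
              = (-(whc (E + 1) f₂)) * monomial m2 1 := by
            linear_combination h0
          rw [hXX, hEq1, Set.image_singleton]
          exact Ideal.mem_span_singleton'.mpr ⟨-(whc (E + 1) f₂), rfl⟩
      rw [Set.image_singleton] at hmem₁
      obtain ⟨G, hG⟩ := Ideal.mem_span_singleton'.mp hmem₁
      -- `hG : G * monomial m2 1 = whc (E+3) f₁`
      have hF₂ : whc (E + 1) f₂ = -(G * monomial m1 1) := by
        have h5 : (monomial m2 1 : MvPolynomial (Fin 8) K) *
            (G * monomial m1 1 + whc (E + 1) f₂) = 0 := by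
          linear_combination h0 + (monomial m1 1 : MvPolynomial (Fin 8) K) * hG
        rcases mul_eq_zero.mp h5 with h | h
        · exact absurd h M2_ne
        · exact eq_neg_of_add_eq_zero_right h
      -- support bound for `G`
      have hGs : ∀ d ∈ G.support, wd d + 4 = E + 3 := by
        intro d hd
        have h9 : (X 2 * (X 4 * G) : MvPolynomial (Fin 8) K) = whc (E + 3) f₁ := by
          rw [← hG, M2_eq]; ring
        have hmem9 : addLeftEmbedding (Finsupp.single 2 1)
            (addLeftEmbedding (Finsupp.single 4 1) d) ∈ (whc (E + 3) f₁).support := by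
          rw [← h9, support_X_mul, support_X_mul]
          exact Finset.mem_map_of_mem _ (Finset.mem_map_of_mem _ hd)
        have h10 := wd_eq_of_mem_whc_support hmem9
        simp only [addLeftEmbedding_apply] at h10
        rw [wd_add, wd_add, wd_single, wd_single, w2, w4] at h10
        omega
      have hGs2 : ∀ d ∈ G.support, wd d + 2 = E + 1 := fun d hd => by
        have := hGs d hd; omega
      -- corrected coefficients
      set f₁' := f₁ - G * g2 with hf₁'
      set f₂' := f₂ + G * g1 with hf₂'
      have hid : f₁' * g1 + f₂' * g2 = (g3 (K := K)) * p := by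
        rw [hf₁', hf₂']
        linear_combination hf
      have hw₁ : whc (E + 3) f₁' = 0 := by
        rw [hf₁', whc_sub, whc_homogmul hGs bnd_g2 whc_g2, hG, sub_self]
      have hw₂ : whc (E + 1) f₂' = 0 := by
        rw [hf₂', whc_add, whc_homogmul hGs2 bnd_g1 whc_g1, hF₂, neg_add_cancel]
      have hbf₁' : ∀ d ∈ f₁'.support, wd d + 2 ≤ E + 5 := by
        classical
        intro d hd
        have hd' : d ∈ f₁.support ∪ (G * g2).support := by
          have hrw : f₁' = f₁ + (-(G * g2)) := by rw [hf₁']; ring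
          rw [hrw] at hd
          have := support_add hd
          rwa [support_neg] at this
        rcases Finset.mem_union.mp hd' with h | h
        · exact hbf₁ d h
        · obtain ⟨d₁, h1, d₂, h2, rfl⟩ := Finset.mem_add.mp (support_mul _ _ h)
          have e1 := hGs d₁ h1
          have e2 := bnd_g2 (K := K) d₂ h2
          rw [wd_add]; omega
      have hbf₂' : ∀ d ∈ f₂'.support, wd d + 4 ≤ E + 5 := by
        classical
        intro d hd
        have hd' : d ∈ f₂.support ∪ (G * g1).support := by
          rw [hf₂'] at hd
          exact support_add hd
        rcases Finset.mem_union.mp hd' with h | h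
        · exact hbf₂ d h
        · obtain ⟨d₁, h1, d₂, h2, rfl⟩ := Finset.mem_add.mp (support_mul _ _ h)
          have e1 := hGs d₁ h1
          have e2 := bnd_g1 (K := K) d₂ h2
          rw [wd_add]; omega
      have hbf₁'' : ∀ d ∈ f₁'.support, wd d + 2 ≤ E + 4 := by
        have hb1 : ∀ d ∈ f₁'.support, wd d + 2 ≤ (E + 4) + 1 := fun d hd => by
          have := hbf₁' d hd; omega
        exact bnd_step hb1 (by omega) hw₁
      have hbf₂'' : ∀ d ∈ f₂'.support, wd d + 4 ≤ E + 4 := by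
        have hb1 : ∀ d ∈ f₂'.support, wd d + 4 ≤ (E + 4) + 1 := fun d hd => by
          have := hbf₂' d hd; omega
        exact bnd_step hb1 (by omega) hw₂
      exact IHD (E + 4) (by omega) f₁' f₂' hid hbf₁'' hbf₂''
  obtain ⟨f₁, f₂, hf, hbf₁, hbf₂⟩ := step
      ((weightedTotalDegree w c₁ + 2) ⊔ (weightedTotalDegree w c₂ + 4)) c₁ c₂ hc
    (fun d hd => by
      have h1 : wd d ≤ weightedTotalDegree w c₁ := le_weightedTotalDegree w hd
      have := le_max_left (weightedTotalDegree w c₁ + 2) (weightedTotalDegree w c₂ + 4)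
      omega)
    (fun d hd => by
      have h1 : wd d ≤ weightedTotalDegree w c₂ := le_weightedTotalDegree w hd
      have := le_max_right (weightedTotalDegree w c₁ + 2) (weightedTotalDegree w c₂ + 4)
      omega)
  -- compare top components in degree `N + 4`
  have hbf₁0 : ∀ d ∈ f₁.support, wd d ≤ N + 2 := fun d hd => by
    have := hbf₁ d hd; omega
  have hbf₂0 : ∀ d ∈ f₂.support, wd d ≤ N := fun d hd => by
    have := hbf₂ d hd; omega
  have htop₁ : whc (N + 2 + 2) (f₁ * g1) = whc (N + 2) f₁ * monomial m1 1 := by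
    rw [keyMul hbf₁0 bnd_g1, whc_g1]
  have htop₂ : whc (N + 4) (f₂ * g2) = whc N f₂ * monomial m2 1 := by
    rw [keyMul hbf₂0 bnd_g2, whc_g2]
  have e1 : N + 2 + 2 = N + 4 := by omega
  rw [e1] at htop₁
  have htop₃ : whc (4 + N) ((g3 (K := K)) * p) = monomial m3 1 * whc N p := by
    rw [keyMul bnd_g3 hp, whc_g3]
  have e2 : 4 + N = N + 4 := by omega
  rw [e2] at htop₃
  have hEq : whc (N + 2) f₁ * monomial m1 1 + whc N f₂ * monomial m2 1
      = monomial m3 1 * whc N p := by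
    rw [← htop₁, ← htop₂, ← whc_add, hf, htop₃]
  -- monomial step : `whc N p ∈ (monomial m1 1, monomial m2 1)`
  have hPmem : whc N p ∈ Ideal.span
      ((fun m => (monomial m (1:K) : MvPolynomial (Fin 8) K)) '' {m1, m2}) := by
    apply monStep (i := 3) (j := 7)
    · intro m hm
      rcases hm with hm | hm
      · subst hm; exact ⟨m1_vals.2.2.1, m1_vals.2.2.2⟩
      · rw [Set.mem_singleton_iff] at hm
        subst hm; exact ⟨m2_vals.2.2.1, m2_vals.2.2.2⟩
    · have hXX : X 3 * (X 7 * whc N p) = monomial m3 1 * whc N p := by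
        rw [M3_eq]; ring
      rw [hXX, ← hEq, Set.image_pair]
      exact Ideal.mem_span_pair.mpr ⟨whc (N + 2) f₁, whc N f₂, rfl⟩
  rw [Set.image_pair] at hPmem
  obtain ⟨u, v, huv⟩ := Ideal.mem_span_pair.mp hPmem
  obtain ⟨u', hu', hbu'⟩ := refine1 wd_m1 u N
  obtain ⟨v', hv', hbv'⟩ := refine1 wd_m2 v N
  have hPdec : whc N p = u' * monomial m1 1 + v' * monomial m2 1 := by
    have h11 := congrArg (whc N) huv
    rw [whc_add, hu', hv', whc_idem] at h11
    exact h11.symm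
  set p' := p - u' * g1 - v' * g2 with hp'def
  have hmul1 : whc N (u' * g1) = u' * monomial m1 1 :=
    whc_homogmul hbu' bnd_g1 whc_g1
  have hmul2 : whc N (v' * g2) = v' * monomial m2 1 :=
    whc_homogmul hbv' bnd_g2 whc_g2
  have hwp' : whc N p' = 0 := by
    rw [hp'def, whc_sub, whc_sub, hmul1, hmul2, hPdec]
    ring
  have hbp' : ∀ d ∈ p'.support, wd d ≤ N := by
    classical
    intro d hd
    have hd' : d ∈ p.support ∪ ((u' * g1).support ∪ (v' * g2).support) := by
      have hrw : p' = p + (-(u' * g1)) + (-(v' * g2)) := by rw [hp'def]; ring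
      rw [hrw] at hd
      rcases Finset.mem_union.mp (support_add hd) with h | h
      · rcases Finset.mem_union.mp (support_add h) with h' | h'
        · exact Finset.mem_union_left _ h'
        · rw [support_neg] at h'
          exact Finset.mem_union_right _ (Finset.mem_union_left _ h')
      · rw [support_neg] at h
        exact Finset.mem_union_right _ (Finset.mem_union_right _ h)
    rcases Finset.mem_union.mp hd' with h | h
    · exact hp d h
    · rcases Finset.mem_union.mp h with h' | h'
      · obtain ⟨d₁, h1, d₂, h2, rfl⟩ := Finset.mem_add.mp (support_mul _ _ h')
        have e1 := hbu' d₁ h1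
        have e2 := bnd_g1 (K := K) d₂ h2
        rw [wd_add]; omega
      · obtain ⟨d₁, h1, d₂, h2, rfl⟩ := Finset.mem_add.mp (support_mul _ _ h')
        have e1 := hbv' d₁ h1
        have e2 := bnd_g2 (K := K) d₂ h2
        rw [wd_add]; omega
  have hg1mem : (g1 (K := K)) ∈ Ideal.span {g1 (K := K), g2 (K := K)} :=
    Ideal.subset_span (Set.mem_insert _ _)
  have hg2mem : (g2 (K := K)) ∈ Ideal.span {g1 (K := K), g2 (K := K)} :=
    Ideal.subset_span (Set.mem_insert_of_mem _ (Set.mem_singleton _))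
  have hmem' : (g3 (K := K)) * p' ∈ Ideal.span {g1 (K := K), g2 (K := K)} := by
    have hrw : (g3 (K := K)) * p' = g3 * p - (g3 * u') * g1 - (g3 * v') * g2 := by
      rw [hp'def]; ring
    rw [hrw]
    exact Ideal.sub_mem _ (Ideal.sub_mem _ hmem (Ideal.mul_mem_left _ _ hg1mem))
      (Ideal.mul_mem_left _ _ hg2mem)
  have hp'span : p' ∈ Ideal.span {g1 (K := K), g2 (K := K)} := by
    rcases Nat.eq_zero_or_pos N with rfl | hN
    · rw [eq_zero_of_bnd0 hbp' hwp']
      exact Ideal.zero_mem _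
    · obtain ⟨E, rfl⟩ : ∃ E, N = E + 1 := ⟨N - 1, by omega⟩
      have hb1 : ∀ d ∈ p'.support, wd d + 0 ≤ E + 1 := fun d hd => by
        have := hbp' d hd; omega
      have hb2 := bnd_step hb1 (by omega) hwp'
      exact IH E (by omega) p' (fun d hd => by have := hb2 d hd; omega) hmem'
  have hfin : p = p' + u' * g1 + v' * g2 := by rw [hp'def]; ring
  rw [hfin]
  exact Ideal.add_mem _ (Ideal.add_mem _ hp'span (Ideal.mul_mem_left _ _ hg1mem))
    (Ideal.mul_mem_left _ _ hg2mem)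

/-! ### Glue : quotient regularity and the main theorem -/

lemma reg_quot {N : Submodule (MvPolynomial (Fin 8) K) (MvPolynomial (Fin 8) K)}
    {r : MvPolynomial (Fin 8) K} (h : ∀ p, r * p ∈ N → p ∈ N) :
    IsSMulRegular ((MvPolynomial (Fin 8) K) ⧸ N) r := by
  intro u v huv
  obtain ⟨pu, rfl⟩ := Submodule.Quotient.mk_surjective N u
  obtain ⟨pv, rfl⟩ := Submodule.Quotient.mk_surjective N v
  have huv' : r • (Submodule.Quotient.mk pu : _ ⧸ N)
      = r • (Submodule.Quotient.mk pv : _ ⧸ N) := huv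
  clear huv
  rw [← Submodule.Quotient.mk_smul, ← Submodule.Quotient.mk_smul] at huv'
  rename' huv' => huv
  rw [Submodule.Quotient.eq] at huv ⊢
  have hrw : r • pu - r • pv = r * (pu - pv) := by
    rw [smul_eq_mul, smul_eq_mul]; ring
  rw [hrw] at huv
  exact h _ huv

lemma ideal_smul_top (I : Ideal (MvPolynomial (Fin 8) K)) :
    (I • (⊤ : Submodule (MvPolynomial (Fin 8) K) (MvPolynomial (Fin 8) K))) = I := by
  apply le_antisymm
  · exact Submodule.smul_le.mpr fun r hr m _ => by
      rw [smul_eq_mul]; exact I.mul_mem_right m hr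
  · intro q hq
    have := Submodule.smul_mem_smul hq
      (Submodule.mem_top (x := (1 : MvPolynomial (Fin 8) K)))
    simpa using this

lemma one_not_mem :
    (1 : MvPolynomial (Fin 8) K) ∉ Ideal.span {g1 (K := K), g2, g3} := by
  intro h
  have hker : Ideal.span {g1 (K := K), g2, g3} ≤
      RingHom.ker (eval (fun _ => (0 : K))) := by
    rw [Ideal.span_le]
    intro q hq
    simp only [Set.mem_insert_iff, Set.mem_singleton_iff] at hq
    rcases hq with rfl | rfl | rfl <;>
      simp [RingHom.mem_ker, g1, g2, g3]
  have h1 := hker h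
  rw [RingHom.mem_ker, map_one] at h1
  exact one_ne_zero h1

end

end IsotropyRegSeqAux

open IsotropyRegSeqAux in
/-- In the polynomial ring `S = K[a,b,c,d,x,y,z,t]` over a
field of characteristic `≠ 2`, the three entries `g₁ = ax+by`,
`g₂ = az+bt+cx+dy`, `g₃ = cz+dt` of the isotropy condition for the `2×4`
matrix `[[a,b,x,y],[c,d,z,t]]` form a regular sequence; the subscheme they
define is a complete intersection of codimension 3. -/
theorem isotropy_equations_regular_sequence (K : Type*) [Field K]
    (hchar : (2 : K) ≠ 0)
    (a b c d x y z t : MvPolynomial (Fin 8) K)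
    (hvars : (a, b, c, d, x, y, z, t) = (X 0, X 1, X 2, X 3, X 4, X 5, X 6, X 7)) :
    RingTheory.Sequence.IsRegular (MvPolynomial (Fin 8) K)
      [a*x + b*y, a*z + b*t + c*x + d*y, c*z + d*t] := by
  simp only [Prod.mk.injEq] at hvars
  obtain ⟨rfl, rfl, rfl, rfl, rfl, rfl, rfl, rfl⟩ := hvars
  show RingTheory.Sequence.IsRegular (MvPolynomial (Fin 8) K)
      [g1 (K := K), g2, g3]
  rw [RingTheory.Sequence.isRegular_iff]
  constructor
  · rw [RingTheory.Sequence.isWeaklyRegular_iff]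
    intro i hi
    simp only [List.length_cons, List.length_nil] at hi
    interval_cases i
    · -- i = 0 : `g1` is a nonzerodivisor
      apply reg_quot
      intro p hp
      have hN : (Ideal.ofList (List.take 0 [g1 (K := K), g2, g3]) •
          (⊤ : Submodule (MvPolynomial (Fin 8) K) (MvPolynomial (Fin 8) K)))
          = (⊥ : Submodule (MvPolynomial (Fin 8) K) (MvPolynomial (Fin 8) K)) := by
        rw [show List.take 0 [g1 (K := K), g2, g3] = [] from rfl,
          Ideal.ofList_nil]
        exact Submodule.bot_smul ⊤
      rw [hN] at hp ⊢
      rw [Submodule.mem_bot] at hp ⊢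
      have hg : [g1 (K := K), g2, g3][0] = g1 (K := K) := rfl
      rw [hg] at hp
      rcases mul_eq_zero.mp hp with h | h
      · exact absurd h g1_ne
      · exact h
    · -- i = 1 : `g2` is a nonzerodivisor mod `(g1)`
      apply reg_quot
      intro p hp
      have hN : (Ideal.ofList (List.take 1 [g1 (K := K), g2, g3]) •
          (⊤ : Submodule (MvPolynomial (Fin 8) K) (MvPolynomial (Fin 8) K)))
          = (Ideal.span {g1 (K := K)} :
              Submodule (MvPolynomial (Fin 8) K) (MvPolynomial (Fin 8) K)) := by
        rw [show List.take 1 [g1 (K := K), g2, g3] = [g1 (K := K)] from rfl,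
          Ideal.ofList_singleton, ideal_smul_top]
      rw [hN] at hp ⊢
      have hg : [g1 (K := K), g2, g3][1] = g2 (K := K) := rfl
      rw [hg] at hp
      exact keyB (weightedTotalDegree w p) p
        (fun d hd => le_weightedTotalDegree w hd) hp
    · -- i = 2 : `g3` is a nonzerodivisor mod `(g1, g2)`
      apply reg_quot
      intro p hp
      have hsp : Ideal.span {g1 (K := K), g2} =
          Ideal.span {g1 (K := K)} ⊔ Ideal.span {g2 (K := K)} := by
        rw [Set.insert_eq, Ideal.span_union]
      have hN : (Ideal.ofList (List.take 2 [g1 (K := K), g2, g3]) •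
          (⊤ : Submodule (MvPolynomial (Fin 8) K) (MvPolynomial (Fin 8) K)))
          = (Ideal.span {g1 (K := K), g2} :
              Submodule (MvPolynomial (Fin 8) K) (MvPolynomial (Fin 8) K)) := by
        rw [show List.take 2 [g1 (K := K), g2, g3] = [g1 (K := K), g2] from rfl,
          Ideal.ofList_cons, Ideal.ofList_singleton, ideal_smul_top, ← hsp]
      rw [hN] at hp ⊢
      have hg : [g1 (K := K), g2, g3][2] = g3 (K := K) := rfl
      rw [hg] at hp
      exact keyC (weightedTotalDegree w p) p
        (fun d hd => le_weightedTotalDegree w hd) hp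
  · -- the ideal is proper
    intro h
    have hN : (Ideal.ofList [g1 (K := K), g2, g3] •
        (⊤ : Submodule (MvPolynomial (Fin 8) K) (MvPolynomial (Fin 8) K)))
        = (Ideal.span {g1 (K := K), g2, g3} :
            Submodule (MvPolynomial (Fin 8) K) (MvPolynomial (Fin 8) K)) := by
      rw [Ideal.ofList_cons, Ideal.ofList_cons, Ideal.ofList_singleton, ideal_smul_top,
        Set.insert_eq, Ideal.span_union, Set.insert_eq ((g2 (K := K))), Ideal.span_union]
    have h1 : (1 : MvPolynomial (Fin 8) K) ∈ Ideal.span {g1 (K := K), g2, g3} := by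
      rw [← hN, ← h]
      exact Submodule.mem_top
    exact one_not_mem h1
end

section
/- Let K be a field of characteristic ≠ 2 and S = K[a,b,c,d,x,y,z,t] the polynomial ring in 8 variables. Let I_W ⊂ S be the ideal generated by g₁ = ax+by, g₂ = az+bt+cx+dy, g₃ = cz+dt, and set Δ₁ = ad−bc, Δ₂ = xt−yz. Then the colon ideals with respect to the two spinor minors coincide: (I_W : Δ₁) = (I_W : Δ₂). (This common colon ideal is the prime ideal I_Σ of the component Σ of W = V(I_W) corresponding to one ruling of the quadric surface.) -/
/-!
The common colon ideal is the kernel `P` of the parametrization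
`(a, b, c, d) = v₀ (u₀, u₁, u₂, u₃)`, `(x, y, z, t) = v₁ (u₁, -u₀, u₃, -u₂)` of `Σ`.
Since `P` is prime, contains `I_W` and contains neither `Δ₁` nor `Δ₂`, both colon ideals lie in `P`.
After a signed renaming of the variables the parametrization is the Segre map `P³ × P¹`, whose
ideal is generated by the `2 × 2` minors of a generic `4 × 2` matrix, and an explicit identity
shows that each minor times `Δᵢ` lies in `I_W`; so `P` lies in both colon ideals.
The kernel of the Segre map is spanned by binomials `θ^α - θ^β` whose exponent matrices have the
same row and column sums, and any two such matrices are connected by `2 × 2` swaps.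
-/

open MvPolynomial

theorem Ideal.colon_span_singleton_eq_of_isPrime {A : Type*} [CommRing A] {I P : Ideal A}
    [hP : P.IsPrime] {δ : A} (hIP : I ≤ P) (hδ : δ ∉ P) (hPI : P ≤ I.colon (Ideal.span {δ})) :
    I.colon (Ideal.span {δ}) = P :=
  le_antisymm
    (fun _ hf => (hP.mem_or_mem (hIP (Ideal.mem_colon_span_singleton.mp hf))).resolve_right hδ)
    hPI

theorem Finsupp.exists_eq_single_one_add {σ : Type*} {α : σ →₀ ℕ} {p : σ} (h : α p ≠ 0) :
    ∃ α', α = single p 1 + α' :=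
  le_iff_exists_add.mp (single_le_iff.mpr (Nat.one_le_iff_ne_zero.mpr h))

namespace MvPolynomial

open Finsupp

variable {R : Type*} [CommRing R]

theorem ker_le_of_monomial_sub_mem {σ τ : Type*} (φ : MvPolynomial σ R →ₗ[R] MvPolynomial τ R)
    (J : Submodule R (MvPolynomial σ R)) (W : (σ →₀ ℕ) → τ →₀ ℕ)
    (hφ : ∀ α, φ (monomial α 1) = monomial (W α) 1)
    (hJ : ∀ α β, W α = W β → monomial α 1 - monomial β 1 ∈ J) :
    LinearMap.ker φ ≤ J := by
  classical
  -- `L` sends every monomial in the image of `φ` back to a chosen preimage monomial.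
  let L := (basisMonomials τ R).constr R fun γ => monomial (Function.invFun W γ) (1 : R)
  have hL : ∀ α, L (φ (monomial α 1)) = monomial (Function.invFun W (W α)) 1 := fun α => by
    rw [hφ, ← congrFun (coe_basisMonomials τ R), Module.Basis.constr_basis]
  have hsection : ∀ f, f - L (φ f) ∈ J := fun f => by
    induction f using induction_on' with
    | monomial α a =>
      rw [← mul_one a, ← smul_eq_mul, ← smul_monomial, map_smul, map_smul, hL, ← smul_sub]
      exact J.smul_mem a (hJ _ _ (Function.invFun_eq ⟨α, rfl⟩).symm)
    | add p q hp hq =>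
      simpa only [map_add, add_sub_add_comm] using J.add_mem hp hq
  intro f hf
  simpa [LinearMap.mem_ker.mp hf] using hsection f

variable {ι κ : Type*}

variable (R) in
noncomputable def segre : MvPolynomial (ι × κ) R →ₐ[R] MvPolynomial (ι ⊕ κ) R :=
  aeval fun p => X (Sum.inl p.1) * X (Sum.inr p.2)

noncomputable def segreWeight : (ι × κ →₀ ℕ) →+ (ι ⊕ κ →₀ ℕ) :=
  mapDomain.addMonoidHom (Sum.inl ∘ Prod.fst) + mapDomain.addMonoidHom (Sum.inr ∘ Prod.snd)

theorem segreWeight_single (p : ι × κ) (n : ℕ) :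
    segreWeight (single p n) = single (Sum.inl p.1) n + single (Sum.inr p.2) n := by
  simp [segreWeight]

theorem segre_monomial (α : ι × κ →₀ ℕ) :
    segre R (monomial α 1) = monomial (segreWeight α) 1 := by
  induction α using Finsupp.induction with
  | zero => simp
  | single_add p n α _ _ ih =>
    rw [monomial_single_add, map_mul, ih, map_add, segreWeight_single, map_pow, segre, aeval_X,
      mul_pow, X_pow_eq_monomial, X_pow_eq_monomial, monomial_mul, monomial_mul, mul_one, mul_one]

theorem segreWeight_single_add_apply_ne_zero (p : ι × κ) (α : ι × κ →₀ ℕ) :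
    segreWeight (single p 1 + α) (Sum.inl p.1) ≠ 0 ∧
      segreWeight (single p 1 + α) (Sum.inr p.2) ≠ 0 := by
  simp [segreWeight_single]

theorem exists_ne_zero_of_segreWeight_inl_ne_zero {β : ι × κ →₀ ℕ} {i : ι}
    (h : segreWeight β (Sum.inl i) ≠ 0) : ∃ j, β (i, j) ≠ 0 := by
  classical
  rw [segreWeight, AddMonoidHom.add_apply, Finsupp.add_apply, mapDomain.addMonoidHom_apply,
    mapDomain.addMonoidHom_apply,
    mapDomain_of_notMem_range (f := Sum.inr ∘ Prod.snd) _ _ (by simp), add_zero] at h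
  obtain ⟨p, hp, hpi⟩ := Finset.mem_image.mp (mapDomain_support (Finsupp.mem_support_iff.mpr h))
  obtain rfl : p.1 = i := Sum.inl_injective hpi
  exact ⟨p.2, Finsupp.mem_support_iff.mp hp⟩

theorem exists_ne_zero_of_segreWeight_inr_ne_zero {β : ι × κ →₀ ℕ} {j : κ}
    (h : segreWeight β (Sum.inr j) ≠ 0) : ∃ i, β (i, j) ≠ 0 := by
  classical
  rw [segreWeight, AddMonoidHom.add_apply, Finsupp.add_apply, mapDomain.addMonoidHom_apply,
    mapDomain.addMonoidHom_apply,
    mapDomain_of_notMem_range (f := Sum.inl ∘ Prod.fst) _ _ (by simp), zero_add] at h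
  obtain ⟨p, hp, hpj⟩ := Finset.mem_image.mp (mapDomain_support (Finsupp.mem_support_iff.mpr h))
  obtain rfl : p.2 = j := Sum.inr_injective hpj
  exact ⟨p.1, Finsupp.mem_support_iff.mp hp⟩

section Minors

variable [LinearOrder ι] [LinearOrder κ]

variable (R ι κ) in
noncomputable def minorsIdeal : Ideal (MvPolynomial (ι × κ) R) :=
  Ideal.span {f | ∃ i k j l, i < k ∧ j < l ∧ f = X (i, j) * X (k, l) - X (i, l) * X (k, j)}

theorem X_mul_X_sub_X_mul_X_mem_minorsIdeal (i k : ι) (j l : κ) :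
    X (i, j) * X (k, l) - X (i, l) * X (k, j) ∈ minorsIdeal R ι κ := by
  have hmem : ∀ i k j l, i < k → j < l →
      X (i, j) * X (k, l) - X (i, l) * X (k, j) ∈ minorsIdeal R ι κ :=
    fun i k j l hik hjl => Ideal.subset_span ⟨i, k, j, l, hik, hjl, rfl⟩
  rcases lt_trichotomy i k with hik | rfl | hik
  · rcases lt_trichotomy j l with hjl | rfl | hjl
    · exact hmem i k j l hik hjl
    · simp
    · simpa using neg_mem (hmem i k l j hik hjl)
  · simp [mul_comm]
  · rcases lt_trichotomy j l with hjl | rfl | hjl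
    · convert neg_mem (hmem k i j l hik hjl) using 1; ring
    · simp
    · convert hmem k i l j hik hjl using 1; ring

theorem exists_monomial_single_add_sub_mem_minorsIdeal (p : ι × κ) {β : ι × κ →₀ ℕ}
    (hrow : segreWeight β (Sum.inl p.1) ≠ 0) (hcol : segreWeight β (Sum.inr p.2) ≠ 0) :
    ∃ γ, segreWeight (single p 1 + γ) = segreWeight β ∧
      monomial (single p 1 + γ) (1 : R) - monomial β 1 ∈ minorsIdeal R ι κ := by
  obtain ⟨i, j⟩ := p
  dsimp only at hrow hcol
  by_cases hp : β (i, j) ≠ 0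
  · obtain ⟨γ, rfl⟩ := exists_eq_single_one_add hp
    exact ⟨γ, rfl, by simp⟩
  obtain ⟨l, hl⟩ := exists_ne_zero_of_segreWeight_inl_ne_zero hrow
  obtain ⟨k, hk⟩ := exists_ne_zero_of_segreWeight_inr_ne_zero hcol
  obtain ⟨β₁, rfl⟩ := exists_eq_single_one_add hl
  have hne : (i, l) ≠ (k, j) := by
    intro h
    obtain ⟨rfl, rfl⟩ := Prod.mk.inj h
    simp at hp
  rw [Finsupp.add_apply, single_eq_of_ne hne.symm, zero_add] at hk
  obtain ⟨γ, rfl⟩ := exists_eq_single_one_add hk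
  refine ⟨single (k, l) 1 + γ, ?_, ?_⟩
  · simp only [map_add, segreWeight_single]
    abel
  · have hswap : monomial (single (i, j) 1 + (single (k, l) 1 + γ)) (1 : R) -
        monomial (single (i, l) 1 + (single (k, j) 1 + γ)) 1 =
        (X (i, j) * X (k, l) - X (i, l) * X (k, j)) * monomial γ 1 := by
      simp only [monomial_single_add, pow_one]
      ring
    rw [hswap]
    exact Ideal.mul_mem_right _ _ (X_mul_X_sub_X_mul_X_mem_minorsIdeal i k j l)

theorem monomial_sub_monomial_mem_minorsIdeal {α β : ι × κ →₀ ℕ}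
    (h : segreWeight α = segreWeight β) :
    monomial α (1 : R) - monomial β 1 ∈ minorsIdeal R ι κ := by
  induction hn : α.degree using Nat.strong_induction_on generalizing α β with
  | _ n ih =>
  rcases eq_or_ne α 0 with rfl | hα
  · obtain rfl : β = 0 := by
      by_contra hβ
      obtain ⟨p, hp⟩ := Finsupp.support_nonempty_iff.mpr hβ
      obtain ⟨β', rfl⟩ := exists_eq_single_one_add (Finsupp.mem_support_iff.mp hp)
      exact (segreWeight_single_add_apply_ne_zero p β').1 (by simp [← h])
    simp
  obtain ⟨p, hp⟩ := Finsupp.support_nonempty_iff.mpr hα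
  obtain ⟨α', rfl⟩ := exists_eq_single_one_add (Finsupp.mem_support_iff.mp hp)
  obtain ⟨hrow, hcol⟩ := segreWeight_single_add_apply_ne_zero p α'
  rw [h] at hrow hcol
  obtain ⟨γ, hγ, hmem⟩ := exists_monomial_single_add_sub_mem_minorsIdeal (R := R) p hrow hcol
  have hα'γ : segreWeight α' = segreWeight γ := by
    rw [← hγ, map_add, map_add] at h
    exact add_left_cancel h
  have hdeg : α'.degree < n := by
    rw [← hn, map_add, degree_single]
    omega
  have hsplit : monomial (single p 1 + α') (1 : R) - monomial β 1 =
      X p * (monomial α' 1 - monomial γ 1) + (monomial (single p 1 + γ) 1 - monomial β 1) := by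
    simp only [monomial_single_add, pow_one]
    ring
  rw [hsplit]
  exact add_mem (Ideal.mul_mem_left _ _ (ih _ hdeg hα'γ rfl)) hmem

theorem ker_segre : RingHom.ker (segre R (ι := ι) (κ := κ)) = minorsIdeal R ι κ := by
  refine le_antisymm (fun f hf => ?_) ?_
  · exact ker_le_of_monomial_sub_mem (segre R).toLinearMap ((minorsIdeal R ι κ).restrictScalars R)
      segreWeight segre_monomial (fun _ _ h => monomial_sub_monomial_mem_minorsIdeal h) hf
  · rw [minorsIdeal, Ideal.span_le]
    rintro _ ⟨i, k, j, l, -, -, rfl⟩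
    simp only [SetLike.mem_coe, RingHom.mem_ker, map_sub, map_mul, segre, aeval_X]
    ring

end Minors

end MvPolynomial

namespace SpinorVariety

variable (K : Type*) [Field K]

noncomputable def isotropyIdeal : Ideal (MvPolynomial (Fin 8) K) :=
  Ideal.span {X 0 * X 4 + X 1 * X 5, X 0 * X 6 + X 1 * X 7 + X 2 * X 4 + X 3 * X 5,
    X 2 * X 6 + X 3 * X 7}

noncomputable def spinorMinor₁ : MvPolynomial (Fin 8) K := X 0 * X 3 - X 1 * X 2

noncomputable def spinorMinor₂ : MvPolynomial (Fin 8) K := X 4 * X 7 - X 5 * X 6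

theorem mem_isotropyIdeal_of_eq {f : MvPolynomial (Fin 8) K} (p q r : MvPolynomial (Fin 8) K)
    (h : f = p * (X 0 * X 4 + X 1 * X 5) + q * (X 0 * X 6 + X 1 * X 7 + X 2 * X 4 + X 3 * X 5) +
      r * (X 2 * X 6 + X 3 * X 7)) :
    f ∈ isotropyIdeal K := by
  rw [h]
  refine add_mem (add_mem ?_ ?_) ?_ <;> exact Ideal.mul_mem_left _ _ (Ideal.subset_span (by simp))

/- With `(a, b, c, d, x, y, z, t) = (X 0, …, X 7)`, the substitution
`θ = [[a, -y], [b, x], [c, -t], [d, z]]` turns `g₁`, `g₃`, `g₂` into the minors `θ₀₁`, `θ₂₃`,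
`θ₀₃ - θ₁₂` of `θ`. -/
noncomputable def ofSegreVars : MvPolynomial (Fin 4 × Fin 2) K →ₐ[K] MvPolynomial (Fin 8) K :=
  aeval fun p => ![![X 0, -X 5], ![X 1, X 4], ![X 2, -X 7], ![X 3, X 6]] p.1 p.2

noncomputable def toSegreVars : MvPolynomial (Fin 8) K →ₐ[K] MvPolynomial (Fin 4 × Fin 2) K :=
  aeval ![X (0, 0), X (1, 0), X (2, 0), X (3, 0), X (1, 1), -X (0, 1), X (3, 1), -X (2, 1)]

theorem ofSegreVars_toSegreVars (f : MvPolynomial (Fin 8) K) :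
    ofSegreVars K (toSegreVars K f) = f := by
  have h : (ofSegreVars K).comp (toSegreVars K) = AlgHom.id K _ :=
    algHom_ext fun i => by fin_cases i <;> simp [ofSegreVars, toSegreVars]
  exact DFunLike.congr_fun h f

noncomputable def spinorParam : MvPolynomial (Fin 8) K →ₐ[K] MvPolynomial (Fin 4 ⊕ Fin 2) K :=
  (segre K).comp (toSegreVars K)

theorem isotropyIdeal_le_ker_spinorParam : isotropyIdeal K ≤ RingHom.ker (spinorParam K) := by
  rw [isotropyIdeal, Ideal.span_le]
  rintro _ (rfl | rfl | rfl) <;> simp [spinorParam, toSegreVars, segre] <;> ring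

theorem spinorMinor_notMem_ker_spinorParam :
    spinorMinor₁ K ∉ RingHom.ker (spinorParam K) ∧
      spinorMinor₂ K ∉ RingHom.ker (spinorParam K) := by
  constructor <;> intro h <;>
    simpa [spinorMinor₁, spinorMinor₂, spinorParam, toSegreVars, segre] using
      congrArg (eval (Sum.elim ![1, 0, 0, 1] ![1, 1])) (RingHom.mem_ker.mp h)

theorem ker_spinorParam_le {Q : Ideal (MvPolynomial (Fin 8) K)}
    (hQ : minorsIdeal K (Fin 4) (Fin 2) ≤ Q.comap (ofSegreVars K)) :
    RingHom.ker (spinorParam K) ≤ Q := fun f hf => by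
  rw [← ofSegreVars_toSegreVars K f]
  exact hQ ((ker_segre (ι := Fin 4) (κ := Fin 2)).le hf)

theorem minorsIdeal_le_comap_colon :
    minorsIdeal K (Fin 4) (Fin 2) ≤ ((isotropyIdeal K).colon (Ideal.span {spinorMinor₁ K}) ⊓
      (isotropyIdeal K).colon (Ideal.span {spinorMinor₂ K})).comap (ofSegreVars K) := by
  rw [minorsIdeal, Ideal.span_le]
  rintro _ ⟨i, k, j, l, hik, hjl, rfl⟩
  obtain ⟨rfl, rfl⟩ : j = 0 ∧ l = 1 := by omega
  simp only [SetLike.mem_coe, Ideal.mem_comap, Ideal.mem_inf, Ideal.mem_colon_span_singleton,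
    ofSegreVars, spinorMinor₁, spinorMinor₂, map_sub, map_mul, aeval_X]
  fin_cases i <;> fin_cases k <;> try exact absurd hik (by decide)
  all_goals simp only [Fin.isValue, Fin.zero_eta, Fin.mk_one, Fin.reduceFinMk, Matrix.cons_val',
    Matrix.cons_val_zero, Matrix.cons_val_fin_one, Matrix.cons_val_one, Matrix.cons_val]
  · exact ⟨mem_isotropyIdeal_of_eq K (X 0 * X 3 - X 1 * X 2) 0 0 (by ring),
      mem_isotropyIdeal_of_eq K (X 4 * X 7 - X 5 * X 6) 0 0 (by ring)⟩
  · exact ⟨mem_isotropyIdeal_of_eq K (-X 2 ^ 2) (X 0 * X 2) (-X 0 ^ 2) (by ring),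
      mem_isotropyIdeal_of_eq K (-X 7 ^ 2) (X 5 * X 7) (-X 5 ^ 2) (by ring)⟩
  · exact ⟨mem_isotropyIdeal_of_eq K (-X 2 * X 3) (X 0 * X 3) (-X 0 * X 1) (by ring),
      mem_isotropyIdeal_of_eq K (X 6 * X 7) (-X 5 * X 6) (X 4 * X 5) (by ring)⟩
  · exact ⟨mem_isotropyIdeal_of_eq K (-X 2 * X 3) (X 1 * X 2) (-X 0 * X 1) (by ring),
      mem_isotropyIdeal_of_eq K (X 6 * X 7) (-X 4 * X 7) (X 4 * X 5) (by ring)⟩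
  · exact ⟨mem_isotropyIdeal_of_eq K (-X 3 ^ 2) (X 1 * X 3) (-X 1 ^ 2) (by ring),
      mem_isotropyIdeal_of_eq K (-X 6 ^ 2) (X 4 * X 6) (-X 4 ^ 2) (by ring)⟩
  · exact ⟨mem_isotropyIdeal_of_eq K 0 0 (X 0 * X 3 - X 1 * X 2) (by ring),
      mem_isotropyIdeal_of_eq K 0 0 (X 4 * X 7 - X 5 * X 6) (by ring)⟩

end SpinorVariety

theorem colon_ideals_of_spinor_minors_coincide_general (K : Type*) [Field K]
    (a b c d x y z t : MvPolynomial (Fin 8) K)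
    (hvars : (a, b, c, d, x, y, z, t) = (X 0, X 1, X 2, X 3, X 4, X 5, X 6, X 7)) :
    (Ideal.span {a*x + b*y, a*z + b*t + c*x + d*y, c*z + d*t}).colon
        (Ideal.span {a*d - b*c}) =
      (Ideal.span {a*x + b*y, a*z + b*t + c*x + d*y, c*z + d*t}).colon
        (Ideal.span {x*t - y*z}) := by
  simp only [Prod.mk.injEq] at hvars
  obtain ⟨rfl, rfl, rfl, rfl, rfl, rfl, rfl, rfl⟩ := hvars
  have : (RingHom.ker (SpinorVariety.spinorParam K)).IsPrime := RingHom.ker_isPrime _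
  have hIW := SpinorVariety.isotropyIdeal_le_ker_spinorParam K
  have hker := SpinorVariety.ker_spinorParam_le K (SpinorVariety.minorsIdeal_le_comap_colon K)
  obtain ⟨hΔ₁, hΔ₂⟩ := SpinorVariety.spinorMinor_notMem_ker_spinorParam K
  exact (Ideal.colon_span_singleton_eq_of_isPrime hIW hΔ₁ (hker.trans inf_le_left)).trans
    (Ideal.colon_span_singleton_eq_of_isPrime hIW hΔ₂ (hker.trans inf_le_right)).symm

/-- In the polynomial ring `S = K[a,b,c,d,x,y,z,t]` over a
field of characteristic `≠ 2`, with `I_W = (ax+by, az+bt+cx+dy, cz+dt)` and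
spinor minors `Δ₁ = ad−bc`, `Δ₂ = xt−yz`, the colon ideals coincide:
`(I_W : Δ₁) = (I_W : Δ₂)`. -/
theorem colon_ideals_of_spinor_minors_coincide (K : Type*) [Field K]
    (hchar : (2 : K) ≠ 0)
    (a b c d x y z t : MvPolynomial (Fin 8) K)
    (hvars : (a, b, c, d, x, y, z, t) = (X 0, X 1, X 2, X 3, X 4, X 5, X 6, X 7)) :
    (Ideal.span {a*x + b*y, a*z + b*t + c*x + d*y, c*z + d*t}).colon
        (Ideal.span {a*d - b*c}) =
      (Ideal.span {a*x + b*y, a*z + b*t + c*x + d*y, c*z + d*t}).colon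
        (Ideal.span {x*t - y*z}) :=
  colon_ideals_of_spinor_minors_coincide_general K a b c d x y z t hvars
end

section
/- Let K be a field and a, b, c, d, x, y, z, t ∈ K with ax+by = 0, az+bt+cx+dy = 0, cz+dt = 0 and ad−bc ≠ 0. Then dx−bz = 0, at−cy = 0, dy−bt = −(az−cx), and (ad−bc)(xt−yz) = (az−cx)². (At any point of the variety of isotropic 2×4 matrices where the spinor minor Δ₁ = ad−bc is nonzero, the nonspinor minors vanish and the product of the two spinor minors is the perfect square (az−cx)².) -/
/-!
Write `N = [A | B]` with `A = !![a, b; c, d]` and `B = !![x, y; z, t]`. Isotropy says that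
`A * Bᵀ` is alternating, `!![0, s; -s, 0]` with `s = a*z + b*t`. Congruence by `adjugate A`
keeps a `2 × 2` matrix alternating and scales it by `det (adjugate A) = Δ₁`, so cancelling `Δ₁`
shows that `adjugate A * B`, whose entries are the nonspinor minors and `±(d*y - b*t)`,
`a*z - c*x`, is again alternating. Its determinant `Δ₁ * Δ₂` is then the square of its
off-diagonal entry.
-/

namespace Matrix

variable {R : Type*} [CommRing R]

theorem mul_alternating_fin_two_mul_transpose (P : Matrix (Fin 2) (Fin 2) R) (s : R) :
    P * !![0, s; -s, 0] * Pᵀ = !![0, P.det * s; -(P.det * s), 0] := by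
  ext i j
  fin_cases i <;> fin_cases j <;> simp [det_fin_two, mul_apply, Fin.sum_univ_two] <;> ring

theorem adjugate_mul_eq_alternating_of_mul_transpose_eq [IsDomain R]
    (A B : Matrix (Fin 2) (Fin 2) R) (s : R) (hA : A.det ≠ 0)
    (h : A * Bᵀ = !![0, s; -s, 0]) : adjugate A * B = !![0, -s; s, 0] := by
  have hscaled : A.det • (adjugate A * B)ᵀ = A.det • !![0, s; -s, 0] := by
    calc A.det • (adjugate A * B)ᵀ = adjugate A * A * Bᵀ * (adjugate A)ᵀ := by
          rw [adjugate_mul, transpose_mul, smul_mul_assoc, one_mul, smul_mul_assoc]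
      _ = adjugate A * !![0, s; -s, 0] * (adjugate A)ᵀ := by rw [mul_assoc _ A, h]
      _ = A.det • !![0, s; -s, 0] := by
          rw [mul_alternating_fin_two_mul_transpose, det_adjugate]
          ext i j
          fin_cases i <;> fin_cases j <;> simp
  rw [← transpose_transpose (adjugate A * B), smul_right_injective _ hA hscaled]
  ext i j
  fin_cases i <;> fin_cases j <;> simp

end Matrix

open Matrix

/-- At any point of the variety of isotropic `2×4` matrices
`[[a,b,x,y],[c,d,z,t]]` (i.e. `ax+by = az+bt+cx+dy = cz+dt = 0`) where the
spinor minor `Δ₁ = ad−bc` is nonzero, the nonspinor minors vanish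
(`dx−bz = 0`, `at−cy = 0`), `dy−bt = −(az−cx)`, and the product of the two
spinor minors is the perfect square `(ad−bc)(xt−yz) = (az−cx)²`. -/
theorem isotropic_matrix_on_spinor_chart (K : Type*) [Field K]
    (a b c d x y z t : K)
    (h1 : a*x + b*y = 0) (h2 : a*z + b*t + c*x + d*y = 0) (h3 : c*z + d*t = 0)
    (hΔ : a*d - b*c ≠ 0) :
    d*x - b*z = 0 ∧ a*t - c*y = 0 ∧ d*y - b*t = -(a*z - c*x) ∧
    (a*d - b*c) * (x*t - y*z) = (a*z - c*x)^2 := by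
  have hiso : !![a, b; c, d] * !![x, y; z, t]ᵀ = !![0, a*z + b*t; -(a*z + b*t), 0] := by
    rw [show !![x, y; z, t]ᵀ = !![x, z; y, t] from eta_fin_two _, mul_fin_two, h1, h3,
      show c*x + d*y = -(a*z + b*t) by linear_combination h2]
  have hskew := adjugate_mul_eq_alternating_of_mul_transpose_eq _ _ _
    (by rwa [det_fin_two_of]) hiso
  have hdet := congrArg det hskew
  rw [det_mul, adjugate_fin_two_of, det_fin_two_of, det_fin_two_of, det_fin_two_of] at hdet
  rw [adjugate_fin_two_of, mul_fin_two, EmbeddingLike.apply_eq_iff_eq] at hskew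
  simp only [vecCons_inj, and_true] at hskew
  obtain ⟨⟨h00, h01⟩, h10, h11⟩ := hskew
  refine ⟨by linear_combination h00, by linear_combination h11, by linear_combination h01 + h10, ?_⟩
  linear_combination hdet - (a*z - c*x + a*z + b*t) * h10
end
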